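/- arXiv:2306.16370 — 4 statements merged into one kernel-verified Lean document; each statement's English description precedes it below -/
import Mathlib

section
/- For every ordinal α > 0 and every cardinal λ > 0, the complete λ-ary tree ^{<α}λ of height α is reversible if and only if min{α, λ} < ω (that is, iff α is finite or λ is finite). -/
/- A tree is a partial order in which the set of strict predecessors of every
element is well-ordered. Basic vocabulary: condensations, automorphisms,
reversibility, heights, levels, nodes, upward closures, branches. -/

universe u v

/- The height of an element `t`: the order type of the set `(·,t)` of its strict
predecessors (which is well-ordered when the order is a tree). -/
open Classical in
noncomputable def treeHt {T : Type u} [PartialOrder T] (t : T) : Ordinal.{u} :=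
  if h : IsWellOrder {s : T // s < t} (fun a b => (a : T) < (b : T)) then
    @Ordinal.type {s : T // s < t} (fun a b => (a : T) < (b : T)) h
  else 0

/-- A partial order is a tree iff every set `(·,t)` is well-ordered by `<`. -/
def IsTree (T : Type u) [PartialOrder T] : Prop :=
  ∀ t : T, IsWellOrder {s : T // s < t} (fun a b => (a : T) < (b : T))

/-- A condensation: a bijective endomorphism. -/
def IsCond {T : Type u} [PartialOrder T] (f : T → T) : Prop :=
  Function.Bijective f ∧ ∀ s t : T, s < t → f s < f t

/-- An automorphism: a bijection preserving and reflecting `<`. -/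
def IsAuto {T : Type u} [PartialOrder T] (f : T → T) : Prop :=
  Function.Bijective f ∧ ∀ s t : T, s < t ↔ f s < f t

/-- A structure is reversible iff every condensation is an automorphism. -/
def Reversible (T : Type u) [PartialOrder T] : Prop :=
  ∀ f : T → T, IsCond f → IsAuto f

/-- The `α`-th level: elements of height `α`. -/
def level (T : Type u) [PartialOrder T] (α : Ordinal.{u}) : Set T :=
  {t : T | treeHt t = α}

/-- The height of the tree: the least ordinal `α` with `L_α = ∅`. -/
noncomputable def treeHeight (T : Type u) [PartialOrder T] : Ordinal.{u} :=
  sInf {α : Ordinal.{u} | level T α = ∅}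

/-- Nodes: equivalence classes of the relation `s ∼ t` iff `(·,s) = (·,t)`. -/
def IsNode {T : Type u} [PartialOrder T] (N : Set T) : Prop :=
  ∃ t : T, N = {s : T | Set.Iio s = Set.Iio t}

/-- `S↑`, the upward closure of `S`. -/
def upClo {T : Type u} [PartialOrder T] (S : Set T) : Set T :=
  {t : T | ∃ s ∈ S, s ≤ t}

/-- A branch: a maximal chain. -/
def IsBranch {T : Type u} [PartialOrder T] (b : Set T) : Prop :=
  IsMaxChain (· ≤ ·) b

/- The height (order type) of a chain (junk value `0` if not well-ordered;
in a tree every chain is well-ordered). -/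
open Classical in
noncomputable def chainHt {T : Type u} [PartialOrder T] (b : Set T) : Ordinal.{u} :=
  if h : IsWellOrder b (fun x y : b => (x : T) < (y : T)) then
    @Ordinal.type b (fun x y : b => (x : T) < (y : T)) h
  else 0

/-- The complete `λ`-ary tree `^{<α}λ` of height `α` over a type `L` (of
cardinality `λ`): all functions `φ : β → L` for ordinals `β < α`, represented by
their graphs (subsets of `Ordinal × L` that are functions whose domain is an
ordinal `β < α`), ordered by strict end-extension, i.e. by strict inclusion of
graphs. -/
def CompleteTree (α : Ordinal.{u}) (L : Type u) : Type (u + 1) :=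
  {s : Set (Ordinal.{u} × L) //
    ∃ β < α, (∀ p ∈ s, p.1 < β) ∧ ∀ γ < β, ∃! x : L, (γ, x) ∈ s}

instance (α : Ordinal.{u}) (L : Type u) : PartialOrder (CompleteTree α L) :=
  inferInstanceAs (PartialOrder {s : Set (Ordinal.{u} × L) //
    ∃ β < α, (∀ p ∈ s, p.1 < β) ∧ ∀ γ < β, ∃! x : L, (γ, x) ∈ s})

namespace CT

variable {L : Type u} [Nonempty L] {α : Ordinal.{u}}

theorem spec (s : CompleteTree α L) :
    ∃ β < α, (∀ p ∈ s.1, p.1 < β) ∧ ∀ γ < β, ∃! x : L, (γ, x) ∈ s.1 := s.2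

/-- The length (domain) of an element of the complete tree. -/
noncomputable def len (s : CompleteTree α L) : Ordinal.{u} := (spec s).choose

theorem len_lt (s : CompleteTree α L) : len s < α := (spec s).choose_spec.1

theorem mem_lt_len (s : CompleteTree α L) {p : Ordinal.{u} × L} (hp : p ∈ s.1) :
    p.1 < len s := (spec s).choose_spec.2.1 p hp

theorem exu (s : CompleteTree α L) {γ : Ordinal.{u}} (hγ : γ < len s) :
    ∃! x : L, (γ, x) ∈ s.1 := (spec s).choose_spec.2.2 γ hγ

open Classical in
/-- The value of `s` at index `γ` (junk if out of range). -/
noncomputable def val (s : CompleteTree α L) (γ : Ordinal.{u}) : L :=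
  if h : γ < len s then (exu s h).choose else Classical.arbitrary L

theorem val_mem (s : CompleteTree α L) {γ : Ordinal.{u}} (hγ : γ < len s) :
    (γ, val s γ) ∈ s.1 := by
  rw [val, dif_pos hγ]; exact (exu s hγ).choose_spec.1

theorem mem_iff {s : CompleteTree α L} {γ : Ordinal.{u}} {x : L} :
    (γ, x) ∈ s.1 ↔ γ < len s ∧ x = val s γ := by
  constructor
  · intro h
    have hγ : γ < len s := mem_lt_len s h
    exact ⟨hγ, (exu s hγ).unique h (val_mem s hγ)⟩
  · rintro ⟨hγ, rfl⟩; exact val_mem s hγ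

theorem len_eq_of {s : CompleteTree α L} {β : Ordinal.{u}}
    (h1 : ∀ p ∈ s.1, p.1 < β) (h2 : ∀ γ < β, ∃ x : L, (γ, x) ∈ s.1) :
    len s = β := by
  rcases lt_trichotomy (len s) β with h | h | h
  · obtain ⟨x, hx⟩ := h2 _ h
    exact absurd (mem_lt_len s hx) (lt_irrefl _)
  · exact h
  · exact absurd (h1 _ (val_mem s h)) (lt_irrefl _)

theorem ext {s t : CompleteTree α L} (hlen : len s = len t)
    (hval : ∀ γ < len s, val s γ = val t γ) : s = t := by
  apply Subtype.ext
  ext ⟨γ, x⟩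
  simp only [mem_iff]
  constructor
  · rintro ⟨hγ, rfl⟩; exact ⟨hlen ▸ hγ, by rw [hval γ hγ]⟩
  · rintro ⟨hγ, rfl⟩; exact ⟨hlen ▸ hγ, (hval γ (hlen ▸ hγ)).symm⟩

theorem le_def {s t : CompleteTree α L} : s ≤ t ↔ s.1 ⊆ t.1 := Iff.rfl

theorem le_iff {s t : CompleteTree α L} :
    s ≤ t ↔ len s ≤ len t ∧ ∀ γ < len s, val t γ = val s γ := by
  constructor
  · intro h
    have hlen : len s ≤ len t := by
      by_contra hc
      push_neg at hc
      have := mem_lt_len t (h (val_mem s hc))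
      exact absurd this (lt_irrefl _)
    refine ⟨hlen, fun γ hγ => ?_⟩
    have := h (val_mem s hγ)
    exact ((mem_iff.mp this).2).symm
  · rintro ⟨hlen, hval⟩ ⟨γ, x⟩ hp
    obtain ⟨hγ, rfl⟩ := mem_iff.mp hp
    exact mem_iff.mpr ⟨lt_of_lt_of_le hγ hlen, (hval γ hγ).symm⟩

theorem lt_iff {s t : CompleteTree α L} :
    s < t ↔ len s < len t ∧ ∀ γ < len s, val t γ = val s γ := by
  rw [lt_iff_le_and_ne, le_iff]
  constructor
  · rintro ⟨⟨hlen, hval⟩, hne⟩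
    refine ⟨lt_of_le_of_ne hlen (fun h => hne ?_), hval⟩
    exact ext h (fun γ hγ => (hval γ hγ).symm)
  · rintro ⟨hlen, hval⟩
    refine ⟨⟨le_of_lt hlen, hval⟩, fun h => ?_⟩
    rw [h] at hlen; exact lt_irrefl _ hlen

theorem lt_len_of_lt {s t : CompleteTree α L} (h : s < t) : len s < len t :=
  (lt_iff.mp h).1

/-- Construct an element from a length and a function. -/
def mk (β : Ordinal.{u}) (hβ : β < α) (g : Ordinal.{u} → L) : CompleteTree α L :=
  ⟨{p | p.1 < β ∧ p.2 = g p.1}, β, hβ, fun p hp => hp.1, fun γ hγ =>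
    ⟨g γ, ⟨hγ, rfl⟩, fun x hx => hx.2⟩⟩

theorem len_mk (β : Ordinal.{u}) (hβ : β < α) (g : Ordinal.{u} → L) :
    len (mk β hβ g) = β :=
  len_eq_of (fun p hp => hp.1) (fun γ hγ => ⟨g γ, hγ, rfl⟩)

theorem val_mk {β : Ordinal.{u}} (hβ : β < α) (g : Ordinal.{u} → L) {γ : Ordinal.{u}}
    (hγ : γ < β) : val (mk β hβ g) γ = g γ := by
  have : (γ, g γ) ∈ (mk β hβ g).1 := ⟨hγ, rfl⟩
  exact ((mem_iff.mp this).2).symm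

end CT
namespace CT
variable {L : Type u} [Nonempty L] {α : Ordinal.{u}}
set_option linter.unusedSectionVars false
set_option linter.unusedVariables false

/-- Restriction of `s` to length `γ`. -/
noncomputable def res (s : CompleteTree α L) (γ : Ordinal.{u}) (h : γ ≤ len s) :
    CompleteTree α L :=
  mk γ (lt_of_le_of_lt h (len_lt s)) (val s)

theorem len_res (s : CompleteTree α L) (γ : Ordinal.{u}) (h : γ ≤ len s) :
    len (res s γ h) = γ := len_mk _ _ _

theorem val_res (s : CompleteTree α L) {γ δ : Ordinal.{u}} (h : γ ≤ len s)
    (hδ : δ < γ) : val (res s γ h) δ = val s δ := val_mk _ _ hδ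

theorem res_le (s : CompleteTree α L) (γ : Ordinal.{u}) (h : γ ≤ len s) :
    res s γ h ≤ s := by
  rw [le_iff, len_res]
  exact ⟨h, fun δ hδ => (val_res s h hδ).symm⟩

theorem res_lt (s : CompleteTree α L) {γ : Ordinal.{u}} (h : γ < len s) :
    res s γ h.le < s := by
  rw [lt_iff, len_res]
  exact ⟨h, fun δ hδ => (val_res s h.le hδ).symm⟩

theorem eq_of_le_le_len {s t u : CompleteTree α L} (hs : s ≤ u) (ht : t ≤ u)
    (h : len s = len t) : s = t := by
  rw [le_iff] at hs ht
  exact ext h (fun γ hγ => by rw [← hs.2 γ hγ, ← ht.2 γ (h ▸ hγ)])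

theorem lt_of_le_of_len_lt {s t : CompleteTree α L} (hle : s ≤ t)
    (h : len s < len t) : s < t :=
  lt_iff.mpr ⟨h, (le_iff.mp hle).2⟩

/-- Extension of `s` to length `δ` by a constant. -/
noncomputable def extend (s : CompleteTree α L) (δ : Ordinal.{u}) (hδ : δ < α) :
    CompleteTree α L :=
  mk δ hδ (fun γ => if h : γ < len s then val s γ else Classical.arbitrary L)

theorem len_extend (s : CompleteTree α L) (δ : Ordinal.{u}) (hδ : δ < α) :
    len (extend s δ hδ) = δ := len_mk _ _ _

theorem le_extend (s : CompleteTree α L) {δ : Ordinal.{u}} (h : len s ≤ δ)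
    (hδ : δ < α) : s ≤ extend s δ hδ := by
  rw [le_iff, len_extend]
  exact ⟨h, fun γ hγ => by rw [extend, val_mk hδ _ (lt_of_lt_of_le hγ h), dif_pos hγ]⟩

/-! ### Condensations -/

theorem len_le_len_f {f : CompleteTree α L → CompleteTree α L}
    (hf : ∀ s t : CompleteTree α L, s < t → f s < f t) (t : CompleteTree α L) :
    len t ≤ len (f t) := by
  have key : ∀ β : Ordinal.{u}, ∀ t : CompleteTree α L, len t = β → β ≤ len (f t) := by
    intro β
    induction β using Ordinal.induction with
    | _ β IH =>
      intro t ht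
      subst ht
      by_contra hc
      push_neg at hc
      set γ := len (f t) with hγ
      have hγlt : γ < len t := hc
      have h1 : res t γ hγlt.le < t := res_lt t hγlt
      have h2 := hf _ _ h1
      have h3 := IH γ hγlt _ (len_res t γ hγlt.le)
      exact absurd (lt_of_le_of_lt h3 (lt_len_of_lt h2)) (lt_irrefl _)
  exact key _ t rfl

/-- If a condensation preserves lengths, it is an automorphism. -/
theorem auto_of_len_pres {f : CompleteTree α L → CompleteTree α L}
    (hf : IsCond f) (hlen : ∀ t, len (f t) = len t) : IsAuto f := by
  refine ⟨hf.1, fun s t => ⟨hf.2 s t, fun h => ?_⟩⟩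
  have h1 : len s < len t := by
    have := lt_len_of_lt h; rwa [hlen, hlen] at this
  set s' := res t (len s) h1.le with hs'
  have hs't : s' < t := res_lt t h1
  have h2 : f s' < f t := hf.2 _ _ hs't
  have h3 : f s' = f s := by
    refine eq_of_le_le_len h2.le h.le ?_
    rw [hlen, hlen, len_res]
  have : s' = s := hf.1.1 h3
  rwa [this] at hs't

end CT
namespace CT
variable {L : Type u} [Nonempty L] {α : Ordinal.{u}}
set_option linter.unusedSectionVars false

theorem cast_succ_comm (m : ℕ) : ((m + 1 : ℕ) : Ordinal.{u}) = 1 + (m : Ordinal.{u}) := by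
  have h : m + 1 = 1 + m := Nat.add_comm m 1
  rw [h, Nat.cast_add, Nat.cast_one]

theorem lt_self_add_one (a : Ordinal.{u}) : a < a + 1 := by
  rw [Ordinal.add_one_eq_succ]; exact Order.lt_succ a

theorem bound_lemma {f : CompleteTree α L → CompleteTree α L}
    (hf : ∀ s t : CompleteTree α L, s < t → f s < f t) :
    ∀ m : ℕ, ∀ t : CompleteTree α L, len t + m < α → len (f t) + m < α := by
  intro m
  induction m with
  | zero => intro t _; simpa using len_lt (f t)
  | succ m IH =>
    intro t h
    rw [cast_succ_comm, ← add_assoc] at h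
    have h' : len t + 1 < α := lt_of_le_of_lt (le_self_add) h
    set t' := extend t (len t + 1) h' with ht'
    have htt' : t < t' :=
      lt_of_le_of_len_lt (le_extend t (le_of_lt (lt_self_add_one _)) h')
        (by rw [len_extend]; exact lt_self_add_one _)
    have hlt' : len t' + (m : Ordinal) < α := by rw [ht', len_extend]; exact h
    have h2 := IH t' hlt'
    have h3 : len (f t) + 1 ≤ len (f t') :=
      Order.add_one_le_iff.mpr (lt_len_of_lt (hf _ _ htt'))
    rw [cast_succ_comm, ← add_assoc]
    exact lt_of_le_of_lt (add_le_add_left h3 _) h2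

theorem reversible_of_alpha_lt_omega (hαω : α < Ordinal.omega0) :
    Reversible (CompleteTree α L) := by
  intro f hf
  apply auto_of_len_pres hf
  intro t
  obtain ⟨n, rfl⟩ := Ordinal.lt_omega0.mp hαω
  obtain ⟨k, hk⟩ := Ordinal.lt_omega0.mp (lt_trans (len_lt t) (Ordinal.nat_lt_omega0 n))
  obtain ⟨k', hk'⟩ := Ordinal.lt_omega0.mp (lt_trans (len_lt (f t)) (Ordinal.nat_lt_omega0 n))
  have hkn : k < n := by
    have := len_lt t; rw [hk] at this; exact_mod_cast this
  have hk'n : k' < n := by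
    have := len_lt (f t); rw [hk'] at this; exact_mod_cast this
  have hle : k ≤ k' := by
    have := len_le_len_f hf.2 t; rw [hk, hk'] at this; exact_mod_cast this
  rw [hk, hk']
  norm_cast
  by_contra hne
  have hlt : k < k' := lt_of_le_of_ne hle (fun h => hne h.symm)
  have hb : len t + ((n - 1 - k : ℕ) : Ordinal) < (n : Ordinal) := by
    rw [hk, ← Nat.cast_add]
    exact_mod_cast (by omega : k + (n - 1 - k) < n)
  have := bound_lemma hf.2 (n - 1 - k) t hb
  rw [hk', ← Nat.cast_add] at this
  have : k' + (n - 1 - k) < n := by exact_mod_cast this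
  omega

end CT
namespace CT
variable {L : Type u} [Nonempty L] {α : Ordinal.{u}}
set_option linter.unusedSectionVars false

theorem eq_of_len_zero {s t : CompleteTree α L} (hs : len s = 0) (ht : len t = 0) :
    s = t :=
  ext (by rw [hs, ht]) (fun γ hγ => absurd hγ (by rw [hs]; exact not_lt_of_ge (zero_le (a := γ))))

/-- Append a single value at the end. -/
noncomputable def app (w : CompleteTree α L) (x : L) (h : len w + 1 < α) :
    CompleteTree α L :=
  mk (len w + 1) h (fun δ => if δ = len w then x else val w δ)

theorem len_app (w : CompleteTree α L) (x : L) (h : len w + 1 < α) :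
    len (app w x h) = len w + 1 := len_mk _ _ _

theorem val_app_last (w : CompleteTree α L) (x : L) (h : len w + 1 < α) :
    val (app w x h) (len w) = x := by
  rw [app, val_mk h _ (lt_self_add_one _), if_pos rfl]

theorem val_app_lt (w : CompleteTree α L) (x : L) (h : len w + 1 < α)
    {δ : Ordinal.{u}} (hδ : δ < len w) :
    val (app w x h) δ = val w δ := by
  rw [app, val_mk h _ (lt_trans hδ (lt_self_add_one _)), if_neg (ne_of_lt hδ)]

theorem lt_app (w : CompleteTree α L) (x : L) (h : len w + 1 < α) :
    w < app w x h := by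
  rw [lt_iff, len_app]
  exact ⟨lt_self_add_one _, fun δ hδ => val_app_lt w x h hδ⟩

theorem lt_add_one_iff_ord {δ γ : Ordinal.{u}} : δ < γ + 1 ↔ δ ≤ γ := by
  rw [Ordinal.add_one_eq_succ]; exact Order.lt_succ_iff

theorem app_eq {w v : CompleteTree α L} (h : len w + 1 < α)
    (hv : len v = len w + 1) (hwv : w < v) : v = app w (val v (len w)) h := by
  refine ext (by rw [len_app, hv]) (fun δ hδ => ?_)
  rw [hv] at hδ
  rcases (lt_add_one_iff_ord.mp hδ).lt_or_eq with h' | h'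
  · rw [val_app_lt w _ h h', (le_iff.mp hwv.le).2 δ h']
  · subst h'; rw [val_app_last]

theorem reversible_of_finite [Finite L] : Reversible (CompleteTree α L) := by
  intro f hf
  apply auto_of_len_pres hf
  suffices key : ∀ β : Ordinal.{u}, ∀ t : CompleteTree α L, len t = β → len (f t) = β by
    exact fun t => key _ t rfl
  intro β
  induction β using Ordinal.induction with
  | _ β IH =>
  intro t ht
  -- every element at level β is the image of an element at level β
  have pre : ∀ w : CompleteTree α L, len w = β → ∃ v, len v = β ∧ f v = w := by
    intro w hw
    obtain ⟨v, hv⟩ := hf.1.2 w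
    have h1 : len v ≤ β := by
      have := len_le_len_f hf.2 v; rw [hv, hw] at this; exact this
    rcases h1.lt_or_eq with h2 | h2
    · exact absurd (by rw [IH (len v) h2 v rfl] : len (f v) = len v)
        (by rw [hv, hw]; exact (ne_of_lt h2).symm)
    · exact ⟨v, h2, hv⟩
  rcases Ordinal.zero_or_succ_or_isSuccLimit β with hβ | ⟨γ, hβ⟩ | hβ
  · -- zero case
    subst hβ
    obtain ⟨v, hv0, hfv⟩ := pre (res t 0 zero_le')
      (len_res t 0 zero_le')
    rw [eq_of_len_zero ht hv0] at *
    rw [hfv]; exact len_res _ _ _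
  · -- successor case
    rw [← Ordinal.add_one_eq_succ] at hβ
    subst hβ
    have hβα : γ + 1 < α := ht ▸ len_lt t
    have hγt : γ ≤ len t := by rw [ht]; exact (lt_self_add_one γ).le
    set u := res t γ hγt with hu
    have hlenu : len u = γ := len_res t γ hγt
    have hut : u < t := res_lt t (by rw [ht]; exact lt_self_add_one γ)
    have hfu : len (f u) = γ := IH γ (lt_self_add_one γ) u hlenu
    have hα2 : len (f u) + 1 < α := by rw [hfu]; exact hβα
    have hα1 : len u + 1 < α := by rw [hlenu]; exact hβα
    -- for each x, the level-(γ+1) successor of f u labelled x has a preimage above u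
    have main : ∀ x : L, ∃ v, (len v = γ + 1 ∧ u < v) ∧ f v = app (f u) x hα2 := by
      intro x
      obtain ⟨v, hv1, hv2⟩ := pre (app (f u) x hα2) (by rw [len_app, hfu])
      refine ⟨v, ⟨hv1, ?_⟩, hv2⟩
      have hγv : γ ≤ len v := by rw [hv1]; exact (lt_self_add_one γ).le
      set u' := res v γ hγv with hu'
      have hlenu' : len u' = γ := len_res v γ hγv
      have hu'v : u' < v := res_lt v (by rw [hv1]; exact lt_self_add_one γ)
      have hfu' : len (f u') = γ := IH γ (lt_self_add_one γ) u' hlenu'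
      have h5 : f u' < app (f u) x hα2 := hv2 ▸ hf.2 _ _ hu'v
      have h6 : f u' = f u :=
        eq_of_le_le_len h5.le (lt_app (f u) x hα2).le (by rw [hfu', hfu])
      have : u' = u := hf.1.1 h6
      rw [← this]; exact hu'v
    choose V hV1 hV2 using main
    set Ψ : L → L := fun x => val (V x) γ with hΨ
    have hVx : ∀ x : L, V x = app u (Ψ x) hα1 := by
      intro x
      have := app_eq hα1 (by rw [(hV1 x).1, hlenu]) (hV1 x).2
      rwa [hlenu] at this
    have hΨinj : Function.Injective Ψ := by
      intro x y hxy
      have : V x = V y := by rw [hVx x, hVx y, hxy]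
      have h7 : app (f u) x hα2 = app (f u) y hα2 := by
        rw [← hV2 x, ← hV2 y, this]
      have := congrArg (fun z => val z (len (f u))) h7
      simpa [val_app_last] using this
    obtain ⟨x, hx⟩ := Finite.injective_iff_surjective.mp hΨinj (val t γ)
    have htapp : t = app u (val t γ) hα1 := by
      have := app_eq hα1 (by rw [ht, hlenu]) hut
      rwa [hlenu] at this
    have : t = V x := by rw [htapp, hVx x, hx]
    rw [this, hV2 x, len_app, hfu]
  · -- limit case
    have hβle : β ≤ len (f t) := ht ▸ len_le_len_f hf.2 t
    rcases hβle.lt_or_eq with hlt | h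
    · exfalso
      set w := res (f t) β hlt.le with hw
      have hlenw : len w = β := len_res _ _ _
      have hwft : w < f t := res_lt (f t) hlt
      obtain ⟨v, hv1, hv2⟩ := pre w hlenw
      have hres : ∀ γ, γ < β → ∀ (h1 : γ ≤ len v) (h2 : γ ≤ len t),
          res v γ h1 = res t γ h2 := by
        intro γ hγ h1 h2
        have ha : len (f (res v γ h1)) = γ := IH γ hγ _ (len_res _ _ _)
        have hb : len (f (res t γ h2)) = γ := IH γ hγ _ (len_res _ _ _)
        have hc : f (res v γ h1) < f t := by
          rcases eq_or_lt_of_le h1 with he | hlt'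
          · have : res v γ h1 = v := ext (by rw [len_res, he])
              (fun δ hδ => by rw [len_res] at hδ; exact val_res v h1 hδ)
            rw [this, hv2]; exact hwft
          · exact lt_trans (hv2 ▸ hf.2 _ _ (res_lt v hlt')) hwft
        have hd : f (res t γ h2) < f t := hf.2 _ _ (res_lt t (lt_of_lt_of_le hγ (by rw [ht])))
        exact hf.1.1 (eq_of_le_le_len hc.le hd.le (by rw [ha, hb]))
      have hvt : v = t := by
        refine ext (by rw [hv1, ht]) (fun γ hγ => ?_)
        rw [hv1] at hγ
        have hγ1 : γ + 1 < β := by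
          rw [Ordinal.add_one_eq_succ]; exact hβ.succ_lt hγ
        have e1 : γ + 1 ≤ len v := by rw [hv1]; exact hγ1.le
        have e2 : γ + 1 ≤ len t := by rw [ht]; exact hγ1.le
        have := hres (γ + 1) hγ1 e1 e2
        have hγγ : γ < γ + 1 := lt_self_add_one γ
        calc val v γ = val (res v (γ + 1) e1) γ := (val_res v e1 hγγ).symm
          _ = val (res t (γ + 1) e2) γ := by rw [this]
          _ = val t γ := val_res t e2 hγγ
      have hft : f t = w := by rw [← hvt, hv2]
      rw [hft, hlenw] at hlt
      exact lt_irrefl _ hlt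
    · exact h.symm

end CT
namespace CT
variable {L : Type u} [Nonempty L] {α : Ordinal.{u}}
set_option linter.unusedSectionVars false

theorem add_nat_lt (hω : Ordinal.omega0 ≤ α) (m : ℕ) {δ : Ordinal.{u}} (hδ : δ < α) :
    (m : Ordinal) + δ < α := by
  rcases lt_or_ge δ Ordinal.omega0 with h | h
  · exact lt_of_lt_of_le (Ordinal.principal_add_omega0 (Ordinal.nat_lt_omega0 m) h) hω
  · rw [Ordinal.add_absorp (b := 1)
      (by rw [Ordinal.opow_one]; exact Ordinal.nat_lt_omega0 m) (by rwa [Ordinal.opow_one])]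
    exact hδ

theorem two_add_lt (hω : Ordinal.omega0 ≤ α) {δ : Ordinal.{u}} (hδ : δ < α) :
    2 + δ < α := by
  have := add_nat_lt hω 2 hδ; exact_mod_cast this

theorem one_add_lt (hω : Ordinal.omega0 ≤ α) {δ : Ordinal.{u}} (hδ : δ < α) :
    1 + δ < α := by
  have := add_nat_lt hω 1 hδ; exact_mod_cast this

theorem sub_lt_sub {β β' : Ordinal.{u}} (c : Ordinal.{u}) (h : c ≤ β) (h' : β < β') :
    β - c < β' - c := by
  rw [← add_lt_add_iff_left c, Ordinal.add_sub_cancel_of_le h,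
    Ordinal.add_sub_cancel_of_le (h.trans h'.le)]
  exact h'

theorem sub_lt_of_lt_add {c γ x : Ordinal.{u}} (h : c ≤ γ) (h' : γ < c + x) :
    γ - c < x := by
  rw [← add_lt_add_iff_left c, Ordinal.add_sub_cancel_of_le h]
  exact h'

theorem one_lt_two_ord : (1 : Ordinal.{u}) < 2 := by
  rw [show (2 : Ordinal.{u}) = 1 + 1 from (one_add_one_eq_two).symm]
  exact lt_self_add_one 1

theorem two_le_of_one_lt {β : Ordinal.{u}} (h : 1 < β) : 2 ≤ β := by
  rw [show (2 : Ordinal.{u}) = 1 + 1 from (one_add_one_eq_two).symm]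
  exact Order.add_one_le_iff.mpr h

theorem lt_two_cases {γ : Ordinal.{u}} (h : γ < 2) : γ = 0 ∨ γ = 1 := by
  rw [show (2 : Ordinal.{u}) = 1 + 1 from (one_add_one_eq_two).symm] at h
  exact Ordinal.le_one_iff.mp (lt_add_one_iff_ord.mp h)

section Construction

theorem Fb_bound (hω : Ordinal.omega0 ≤ α) (s : CompleteTree α L) : 2 + (len s - 1) < α :=
  two_add_lt hω (lt_of_le_of_lt (Ordinal.sub_le_self _ _) (len_lt s))

theorem Gb_bound (hω : Ordinal.omega0 ≤ α) (w : CompleteTree α L) : 1 + (len w - 2) < α :=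
  one_add_lt hω (lt_of_le_of_lt (Ordinal.sub_le_self _ _) (len_lt w))

open Classical in
/-- The non-automorphism condensation. -/
noncomputable def F (hω : Ordinal.omega0 ≤ α) (aa bb : L) (σ ρ : L → L) (s : CompleteTree α L) : CompleteTree α L :=
  if h0 : len s = 0 then s
  else if ha : val s 0 = aa then
    if h2 : 2 ≤ len s then
      mk (len s) (len_lt s) (fun γ => if γ = 1 then σ (val s 1) else val s γ)
    else s
  else if hb : val s 0 = bb then
    mk (2 + (len s - 1)) (Fb_bound hω s) (fun γ => if γ < 2 then aa else val s (1 + (γ - 2)))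
  else
    mk (len s) (len_lt s) (fun γ => if γ = 0 then ρ (val s 0) else val s γ)

open Classical in
/-- Its inverse. -/
noncomputable def G (hω : Ordinal.omega0 ≤ α) (aa bb : L) (σi ρi : L → L) (w : CompleteTree α L) : CompleteTree α L :=
  if h0 : len w = 0 then w
  else if ha : val w 0 = aa then
    if h2 : 2 ≤ len w then
      if hb : val w 1 = aa then
        mk (1 + (len w - 2)) (Gb_bound hω w) (fun γ => if γ = 0 then bb else val w (2 + (γ - 1)))
      else
        mk (len w) (len_lt w) (fun γ => if γ = 1 then σi (val w 1) else val w γ)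
    else w
  else
    mk (len w) (len_lt w) (fun γ => if γ = 0 then ρi (val w 0) else val w γ)

variable {aa bb : L} {σ σi ρ ρi : L → L} {s w : CompleteTree α L} (hω : Ordinal.omega0 ≤ α)

theorem F_eq_0 (h0 : len s = 0) : F hω aa bb σ ρ s = s := by rw [F, dif_pos h0]

theorem F_eq_a1 (h0 : len s ≠ 0) (ha : val s 0 = aa) (h2 : ¬ 2 ≤ len s) :
    F hω aa bb σ ρ s = s := by rw [F, dif_neg h0, dif_pos ha, dif_neg h2]

theorem F_eq_a2 (h0 : len s ≠ 0) (ha : val s 0 = aa) (h2 : 2 ≤ len s) :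
    F hω aa bb σ ρ s =
      mk (len s) (len_lt s) (fun γ => if γ = 1 then σ (val s 1) else val s γ) := by
  rw [F, dif_neg h0, dif_pos ha, dif_pos h2]

theorem F_eq_b (h0 : len s ≠ 0) (ha : val s 0 ≠ aa) (hb : val s 0 = bb) :
    F hω aa bb σ ρ s =
      mk (2 + (len s - 1)) (Fb_bound hω s)
        (fun γ => if γ < 2 then aa else val s (1 + (γ - 2))) := by
  rw [F, dif_neg h0, dif_neg ha, dif_pos hb]

theorem F_eq_c (h0 : len s ≠ 0) (ha : val s 0 ≠ aa) (hb : val s 0 ≠ bb) :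
    F hω aa bb σ ρ s =
      mk (len s) (len_lt s) (fun γ => if γ = 0 then ρ (val s 0) else val s γ) := by
  rw [F, dif_neg h0, dif_neg ha, dif_neg hb]

theorem G_eq_0 (h0 : len w = 0) : G hω aa bb σi ρi w = w := by rw [G, dif_pos h0]

theorem G_eq_a1 (h0 : len w ≠ 0) (ha : val w 0 = aa) (h2 : ¬ 2 ≤ len w) :
    G hω aa bb σi ρi w = w := by rw [G, dif_neg h0, dif_pos ha, dif_neg h2]

theorem G_eq_ab (h0 : len w ≠ 0) (ha : val w 0 = aa) (h2 : 2 ≤ len w) (hb : val w 1 = aa) :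
    G hω aa bb σi ρi w =
      mk (1 + (len w - 2)) (Gb_bound hω w)
        (fun γ => if γ = 0 then bb else val w (2 + (γ - 1))) := by
  rw [G, dif_neg h0, dif_pos ha, dif_pos h2, dif_pos hb]

theorem G_eq_a2 (h0 : len w ≠ 0) (ha : val w 0 = aa) (h2 : 2 ≤ len w) (hb : val w 1 ≠ aa) :
    G hω aa bb σi ρi w =
      mk (len w) (len_lt w) (fun γ => if γ = 1 then σi (val w 1) else val w γ) := by
  rw [G, dif_neg h0, dif_pos ha, dif_pos h2, dif_neg hb]

theorem G_eq_c (h0 : len w ≠ 0) (ha : val w 0 ≠ aa) :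
    G hω aa bb σi ρi w =
      mk (len w) (len_lt w) (fun γ => if γ = 0 then ρi (val w 0) else val w γ) := by
  rw [G, dif_neg h0, dif_neg ha]

end Construction
end CT
namespace CT
variable {L : Type u} [Nonempty L] {α : Ordinal.{u}}
set_option linter.unusedSectionVars false

section Construction
variable {aa bb : L} {σ σi ρ ρi : L → L} {s w t : CompleteTree α L}

theorem zero_lt_two_ord : (0 : Ordinal.{u}) < 2 :=
  lt_trans zero_lt_one one_lt_two_ord

theorem lt_of_len_zero (hs : len s = 0) (ht : len t ≠ 0) : s < t :=
  lt_iff.mpr ⟨by rw [hs]; exact pos_iff_ne_zero.mpr ht,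
    fun γ hγ => absurd hγ (by rw [hs]; exact not_lt_of_ge (zero_le (a := γ)))⟩

theorem G_F (hω : Ordinal.omega0 ≤ α) (hab : aa ≠ bb)
    (hσa : ∀ x, σ x ≠ aa) (hσi : ∀ x, σi (σ x) = x)
    (hρa : ∀ c, c ≠ aa → c ≠ bb → ρ c ≠ aa)
    (hρi : ∀ c, c ≠ aa → c ≠ bb → ρi (ρ c) = c)
    (s : CompleteTree α L) :
    G hω aa bb σi ρi (F hω aa bb σ ρ s) = s := by
  by_cases h0 : len s = 0
  · rw [F_eq_0 hω h0, G_eq_0 hω h0]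
  have h0lt : 0 < len s := pos_iff_ne_zero.mpr h0
  have h1s : 1 ≤ len s := Ordinal.one_le_iff_ne_zero.mpr h0
  by_cases ha : val s 0 = aa
  · by_cases h2 : 2 ≤ len s
    · -- a-branch, long
      rw [F_eq_a2 hω h0 ha h2]
      set g : Ordinal.{u} → L := fun γ => if γ = 1 then σ (val s 1) else val s γ with hg
      set w := mk (len s) (len_lt s) g with hw
      have lw : len w = len s := len_mk _ _ _
      have h1lt : 1 < len s := lt_of_lt_of_le one_lt_two_ord h2
      have vw0 : val w 0 = aa := by
        rw [hw, val_mk _ _ h0lt, hg]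
        simp only [if_neg (zero_ne_one)]
        exact ha
      have vw1 : val w 1 = σ (val s 1) := by
        rw [hw, val_mk _ _ h1lt, hg]; simp
      rw [G_eq_a2 hω (by rw [lw]; exact h0) vw0 (by rw [lw]; exact h2)
        (by rw [vw1]; exact hσa _)]
      refine ext (by rw [len_mk, lw]) (fun γ hγ => ?_)
      rw [len_mk, lw] at hγ
      rw [val_mk _ _ (by rw [lw]; exact hγ)]
      by_cases hγ1 : γ = 1
      · subst hγ1
        rw [if_pos rfl, vw1, hσi]
      · rw [if_neg hγ1, hw, val_mk _ _ hγ, hg]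
        simp only [if_neg hγ1]
    · rw [F_eq_a1 hω h0 ha h2, G_eq_a1 hω h0 ha h2]
  by_cases hb : val s 0 = bb
  · -- b-branch
    rw [F_eq_b hω h0 ha hb]
    set g : Ordinal.{u} → L := fun γ => if γ < 2 then aa else val s (1 + (γ - 2)) with hg
    set w := mk (2 + (len s - 1)) (Fb_bound hω s) g with hw
    have lw : len w = 2 + (len s - 1) := len_mk _ _ _
    have h2w : 2 ≤ len w := by rw [lw]; exact le_self_add
    have h0w : len w ≠ 0 := by
      intro h; rw [h] at h2w
      exact absurd (lt_of_lt_of_le zero_lt_two_ord h2w) (lt_irrefl _)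
    have vw0 : val w 0 = aa := by
      rw [hw, val_mk _ _ (lt_of_lt_of_le zero_lt_two_ord (by rw [← lw]; exact h2w)), hg]
      simp [zero_lt_two_ord]
    have vw1 : val w 1 = aa := by
      rw [hw, val_mk _ _ (lt_of_lt_of_le one_lt_two_ord (by rw [← lw]; exact h2w)), hg]
      simp [one_lt_two_ord]
    rw [G_eq_ab hω h0w vw0 h2w vw1]
    have lsub : len w - 2 = len s - 1 := by rw [lw, Ordinal.add_sub_cancel]
    have lfull : 1 + (len w - 2) = len s := by
      rw [lsub, Ordinal.add_sub_cancel_of_le h1s]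
    refine ext (by rw [len_mk, lfull]) (fun γ hγ => ?_)
    rw [len_mk, lfull] at hγ
    rw [val_mk _ _ (by rw [lfull]; exact hγ)]
    by_cases hγ0 : γ = 0
    · subst hγ0; rw [if_pos rfl, hb]
    · rw [if_neg hγ0]
      have h1γ : 1 ≤ γ := Ordinal.one_le_iff_ne_zero.mpr hγ0
      have hbound : 2 + (γ - 1) < 2 + (len s - 1) := by
        rw [add_lt_add_iff_left]
        exact sub_lt_sub 1 h1γ hγ
      rw [hw, val_mk _ _ hbound, hg]
      have hnot : ¬ (2 + (γ - 1) < 2) := not_lt.mpr (le_self_add)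
      simp only [if_neg hnot, Ordinal.add_sub_cancel, Ordinal.add_sub_cancel_of_le h1γ]
  · -- c-branch
    rw [F_eq_c hω h0 ha hb]
    set g : Ordinal.{u} → L := fun γ => if γ = 0 then ρ (val s 0) else val s γ with hg
    set w := mk (len s) (len_lt s) g with hw
    have lw : len w = len s := len_mk _ _ _
    have vw0 : val w 0 = ρ (val s 0) := by rw [hw, val_mk _ _ h0lt, hg]; simp
    rw [G_eq_c hω (by rw [lw]; exact h0) (by rw [vw0]; exact hρa _ ha hb)]
    refine ext (by rw [len_mk, lw]) (fun γ hγ => ?_)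
    rw [len_mk, lw] at hγ
    rw [val_mk _ _ (by rw [lw]; exact hγ)]
    by_cases hγ0 : γ = 0
    · subst hγ0; rw [if_pos rfl, vw0, hρi _ ha hb]
    · rw [if_neg hγ0, hw, val_mk _ _ hγ, hg]
      simp only [if_neg hγ0]

end Construction
end CT
namespace CT
variable {L : Type u} [Nonempty L] {α : Ordinal.{u}}
set_option linter.unusedSectionVars false

section Construction
variable {aa bb : L} {σ σi ρ ρi : L → L} {s w t : CompleteTree α L}

theorem F_G (hω : Ordinal.omega0 ≤ α) (hab : aa ≠ bb)
    (hσs : ∀ z, z ≠ aa → σ (σi z) = z)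
    (hρs : ∀ z, z ≠ aa → ρ (ρi z) = z)
    (hρib : ∀ z, z ≠ aa → ρi z ≠ aa ∧ ρi z ≠ bb)
    (w : CompleteTree α L) :
    F hω aa bb σ ρ (G hω aa bb σi ρi w) = w := by
  by_cases h0 : len w = 0
  · rw [G_eq_0 hω h0, F_eq_0 hω h0]
  have h0lt : 0 < len w := pos_iff_ne_zero.mpr h0
  by_cases ha : val w 0 = aa
  · by_cases h2 : 2 ≤ len w
    · have h1lt : 1 < len w := lt_of_lt_of_le one_lt_two_ord h2
      by_cases hb : val w 1 = aa
      · -- b-image branch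
        rw [G_eq_ab hω h0 ha h2 hb]
        set g : Ordinal.{u} → L := fun γ => if γ = 0 then bb else val w (2 + (γ - 1)) with hg
        set s' := mk (1 + (len w - 2)) (Gb_bound hω w) g with hs'
        have ls : len s' = 1 + (len w - 2) := len_mk _ _ _
        have h1le : (1 : Ordinal.{u}) ≤ 1 + (len w - 2) := le_self_add
        have h0s : len s' ≠ 0 := by
          rw [ls]; exact Ordinal.one_le_iff_ne_zero.mp h1le
        have vs0 : val s' 0 = bb := by
          rw [hs', val_mk _ _ (lt_of_lt_of_le zero_lt_one h1le), hg]; simp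
        have lsub : len s' - 1 = len w - 2 := by rw [ls, Ordinal.add_sub_cancel]
        have lfull : 2 + (len s' - 1) = len w := by
          rw [lsub, Ordinal.add_sub_cancel_of_le h2]
        rw [F_eq_b hω h0s (by rw [vs0]; exact Ne.symm hab) vs0]
        refine ext (by rw [len_mk, lfull]) (fun γ hγ => ?_)
        rw [len_mk, lfull] at hγ
        rw [val_mk _ _ (by rw [lfull]; exact hγ)]
        by_cases hγ2 : γ < 2
        · rw [if_pos hγ2]
          rcases lt_two_cases hγ2 with h | h
          · subst h; exact ha.symm
          · subst h; exact hb.symm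
        · rw [if_neg hγ2]
          have h2γ : 2 ≤ γ := not_lt.mp hγ2
          have hbound : 1 + (γ - 2) < 1 + (len w - 2) := by
            rw [add_lt_add_iff_left]
            exact sub_lt_sub 2 h2γ hγ
          rw [hs', val_mk _ _ hbound, hg]
          have hne0 : ¬ (1 + (γ - 2) = 0) :=
            Ordinal.one_le_iff_ne_zero.mp (le_self_add)
          simp only [if_neg hne0, Ordinal.add_sub_cancel,
            Ordinal.add_sub_cancel_of_le h2γ]
      · -- σ-image branch
        rw [G_eq_a2 hω h0 ha h2 hb]
        set g : Ordinal.{u} → L := fun γ => if γ = 1 then σi (val w 1) else val w γ with hg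
        set s' := mk (len w) (len_lt w) g with hs'
        have ls : len s' = len w := len_mk _ _ _
        have vs0 : val s' 0 = aa := by
          rw [hs', val_mk _ _ h0lt, hg]
          simp only [if_neg (zero_ne_one)]
          exact ha
        have vs1 : val s' 1 = σi (val w 1) := by
          rw [hs', val_mk _ _ h1lt, hg]; simp
        rw [F_eq_a2 hω (by rw [ls]; exact h0) vs0 (by rw [ls]; exact h2)]
        refine ext (by rw [len_mk, ls]) (fun γ hγ => ?_)
        rw [len_mk, ls] at hγ
        rw [val_mk _ _ (by rw [ls]; exact hγ)]
        by_cases hγ1 : γ = 1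
        · subst hγ1
          rw [if_pos rfl, vs1, hσs _ hb]
        · rw [if_neg hγ1, hs', val_mk _ _ hγ, hg]
          simp only [if_neg hγ1]
    · rw [G_eq_a1 hω h0 ha h2, F_eq_a1 hω h0 ha h2]
  · -- ρ-image branch
    rw [G_eq_c hω h0 ha]
    set g : Ordinal.{u} → L := fun γ => if γ = 0 then ρi (val w 0) else val w γ with hg
    set s' := mk (len w) (len_lt w) g with hs'
    have ls : len s' = len w := len_mk _ _ _
    have vs0 : val s' 0 = ρi (val w 0) := by rw [hs', val_mk _ _ h0lt, hg]; simp
    rw [F_eq_c hω (by rw [ls]; exact h0) (by rw [vs0]; exact (hρib _ ha).1)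
      (by rw [vs0]; exact (hρib _ ha).2)]
    refine ext (by rw [len_mk, ls]) (fun γ hγ => ?_)
    rw [len_mk, ls] at hγ
    rw [val_mk _ _ (by rw [ls]; exact hγ)]
    by_cases hγ0 : γ = 0
    · subst hγ0; rw [if_pos rfl, vs0, hρs _ ha]
    · rw [if_neg hγ0, hs', val_mk _ _ hγ, hg]
      simp only [if_neg hγ0]

theorem len_F_ne_zero (hω : Ordinal.omega0 ≤ α) (aa bb : L) (σ ρ : L → L)
    (h0 : len t ≠ 0) : len (F hω aa bb σ ρ t) ≠ 0 := by
  by_cases ha : val t 0 = aa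
  · by_cases h2 : 2 ≤ len t
    · rw [F_eq_a2 hω h0 ha h2, len_mk]; exact h0
    · rw [F_eq_a1 hω h0 ha h2]; exact h0
  · by_cases hb : val t 0 = bb
    · rw [F_eq_b hω h0 ha hb, len_mk]
      intro h
      have : (2 : Ordinal.{u}) ≤ 0 := h ▸ le_self_add
      exact absurd (lt_of_lt_of_le zero_lt_two_ord this) (lt_irrefl _)
    · rw [F_eq_c hω h0 ha hb, len_mk]; exact h0

theorem F_mono (hω : Ordinal.omega0 ≤ α) (aa bb : L) (σ ρ : L → L)
    (hst : s < t) : F hω aa bb σ ρ s < F hω aa bb σ ρ t := by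
  have hl : len s < len t := lt_len_of_lt hst
  have hv : ∀ γ < len s, val t γ = val s γ := (lt_iff.mp hst).2
  by_cases h0s : len s = 0
  · rw [F_eq_0 hω h0s]
    have h0t : len t ≠ 0 := by
      intro h; rw [h, h0s] at hl; exact lt_irrefl _ hl
    exact lt_of_len_zero h0s (len_F_ne_zero hω aa bb σ ρ h0t)
  have h0lt : 0 < len s := pos_iff_ne_zero.mpr h0s
  have h1s : 1 ≤ len s := Ordinal.one_le_iff_ne_zero.mpr h0s
  have h0t : len t ≠ 0 := by
    intro h; rw [h] at hl; exact absurd (lt_trans h0lt hl) (lt_irrefl _)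
  have hv0 : val t 0 = val s 0 := hv 0 h0lt
  have h2t : 2 ≤ len t := two_le_of_one_lt (lt_of_le_of_lt h1s hl)
  by_cases ha : val s 0 = aa
  · rw [F_eq_a2 hω h0t (by rw [hv0]; exact ha) h2t]
    by_cases h2s : 2 ≤ len s
    · rw [F_eq_a2 hω h0s ha h2s]
      rw [lt_iff, len_mk, len_mk]
      refine ⟨hl, fun γ hγ => ?_⟩
      rw [val_mk _ _ hγ, val_mk _ _ (lt_trans hγ hl)]
      by_cases hγ1 : γ = 1
      · subst hγ1
        simp only [if_pos rfl]
        rw [hv 1 (lt_of_lt_of_le one_lt_two_ord h2s)]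
      · simp only [if_neg hγ1]
        exact hv γ hγ
    · rw [F_eq_a1 hω h0s ha h2s]
      rw [lt_iff, len_mk]
      refine ⟨hl, fun γ hγ => ?_⟩
      have hls1 : len s ≤ 1 := lt_add_one_iff_ord.mp (by
        rw [one_add_one_eq_two]; exact not_le.mp h2s)
      have hγ0 : γ = 0 := Ordinal.lt_one_iff_zero.mp (lt_of_lt_of_le hγ hls1)
      subst hγ0
      rw [val_mk _ _ (lt_of_lt_of_le zero_lt_two_ord h2t)]
      simp only [if_neg (zero_ne_one)]
      exact hv 0 h0lt
  · by_cases hb : val s 0 = bb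
    · rw [F_eq_b hω h0s ha hb, F_eq_b hω h0t (by rw [hv0]; exact ha) (by rw [hv0]; exact hb)]
      rw [lt_iff, len_mk, len_mk]
      have h1t : 1 ≤ len t := le_of_lt (lt_of_le_of_lt h1s hl)
      have hlen2 : 2 + (len s - 1) < 2 + (len t - 1) := by
        rw [add_lt_add_iff_left]; exact sub_lt_sub 1 h1s hl
      refine ⟨hlen2, fun γ hγ => ?_⟩
      rw [val_mk _ _ hγ, val_mk _ _ (lt_trans hγ hlen2)]
      by_cases hγ2 : γ < 2
      · simp only [if_pos hγ2]
      · simp only [if_neg hγ2]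
        have h2γ : 2 ≤ γ := not_lt.mp hγ2
        have : γ - 2 < len s - 1 := sub_lt_of_lt_add h2γ hγ
        have hidx : 1 + (γ - 2) < len s := by
          have := (add_lt_add_iff_left (1 : Ordinal.{u})).mpr this
          rwa [Ordinal.add_sub_cancel_of_le h1s] at this
        exact hv _ hidx
    · rw [F_eq_c hω h0s ha hb, F_eq_c hω h0t (by rw [hv0]; exact ha) (by rw [hv0]; exact hb)]
      rw [lt_iff, len_mk, len_mk]
      refine ⟨hl, fun γ hγ => ?_⟩
      rw [val_mk _ _ hγ, val_mk _ _ (lt_trans hγ hl)]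
      by_cases hγ0 : γ = 0
      · subst hγ0; simp only [if_pos rfl, hv0]
      · simp only [if_neg hγ0]
        exact hv γ hγ

end Construction
end CT
namespace CT
variable {L : Type u} [Nonempty L] {α : Ordinal.{u}}
set_option linter.unusedSectionVars false

theorem not_reversible (hω : Ordinal.omega0 ≤ α) [Infinite L] :
    ¬ Reversible (CompleteTree α L) := by
  classical
  obtain ⟨aa, bb, hab⟩ := exists_pair_ne L
  have hL : Cardinal.aleph0 ≤ Cardinal.mk L := Cardinal.infinite_iff.mp inferInstance
  have h1 : Cardinal.mk ↥({aa}ᶜ : Set L) = Cardinal.mk L :=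
    Cardinal.mk_compl_of_infinite _
      (by rw [Cardinal.mk_singleton]; exact lt_of_lt_of_le Cardinal.one_lt_aleph0 hL)
  have h2 : Cardinal.mk ↥(({aa, bb} : Set L)ᶜ) = Cardinal.mk L :=
    Cardinal.mk_compl_of_infinite _
      (lt_of_lt_of_le (Set.Finite.lt_aleph0 (Set.toFinite _)) hL)
  obtain ⟨e1⟩ := Cardinal.eq.mp h1
  obtain ⟨e2⟩ := Cardinal.eq.mp h2
  set E1 : L ≃ {x : L // x ≠ aa} :=
    e1.symm.trans (Equiv.subtypeEquivRight (fun x => Set.mem_compl_singleton_iff)) with hE1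
  set E2 : {x : L // x ≠ aa ∧ x ≠ bb} ≃ {x : L // x ≠ aa} :=
    ((Equiv.subtypeEquivRight (p := fun x => x ≠ aa ∧ x ≠ bb)
      (q := fun x => x ∈ ({aa, bb} : Set L)ᶜ)
      (fun x => by simp [not_or])).trans e2).trans E1 with hE2
  set σ : L → L := fun x => (E1 x).1 with hσ
  set σi : L → L := fun z => if h : z ≠ aa then (E1.symm ⟨z, h⟩ : L) else aa with hσiD
  set ρ : L → L := fun c => if h : c ≠ aa ∧ c ≠ bb then ((E2 ⟨c, h⟩) : L) else aa with hρD
  set ρi : L → L := fun z => if h : z ≠ aa then ((E2.symm ⟨z, h⟩) : L) else aa with hρiD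
  have hσa : ∀ x, σ x ≠ aa := fun x => (E1 x).2
  have hσi : ∀ x, σi (σ x) = x := by
    intro x
    rw [hσiD]
    simp only [hσ]
    rw [dif_pos (E1 x).2, Subtype.coe_eta, Equiv.symm_apply_apply]
  have hσs : ∀ z, z ≠ aa → σ (σi z) = z := by
    intro z hz
    rw [hσiD]
    simp only [hσ]
    rw [dif_pos hz, Equiv.apply_symm_apply]
  have hρa : ∀ c, c ≠ aa → c ≠ bb → ρ c ≠ aa := by
    intro c hc1 hc2
    rw [hρD]
    simp only
    rw [dif_pos ⟨hc1, hc2⟩]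
    exact (E2 ⟨c, ⟨hc1, hc2⟩⟩).2
  have hρi : ∀ c, c ≠ aa → c ≠ bb → ρi (ρ c) = c := by
    intro c hc1 hc2
    have hval : ρ c = ((E2 ⟨c, ⟨hc1, hc2⟩⟩ : {x : L // x ≠ aa}) : L) := by
      rw [hρD]; exact dif_pos ⟨hc1, hc2⟩
    rw [hρiD, hval]
    simp only
    rw [dif_pos (E2 ⟨c, ⟨hc1, hc2⟩⟩).2, Subtype.coe_eta, Equiv.symm_apply_apply]
  have hρib : ∀ z, z ≠ aa → ρi z ≠ aa ∧ ρi z ≠ bb := by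
    intro z hz
    rw [hρiD]
    simp only
    rw [dif_pos hz]
    exact (E2.symm ⟨z, hz⟩).2
  have hρs : ∀ z, z ≠ aa → ρ (ρi z) = z := by
    intro z hz
    have hval : ρi z = ((E2.symm ⟨z, hz⟩ : {x : L // x ≠ aa ∧ x ≠ bb}) : L) := by
      rw [hρiD]; exact dif_pos hz
    rw [hρD, hval]
    simp only
    rw [dif_pos (E2.symm ⟨z, hz⟩).2, Subtype.coe_eta, Equiv.apply_symm_apply]
  intro hrev
  have hbij : Function.Bijective (F hω aa bb σ ρ) :=
    Function.bijective_iff_has_inverse.mpr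
      ⟨G hω aa bb σi ρi, fun s => G_F hω hab hσa hσi hρa hρi s,
        fun w => F_G hω hab hσs hρs hρib w⟩
  have hauto := hrev _ ⟨hbij, fun s t h => F_mono hω aa bb σ ρ h⟩
  have h1α : (1 : Ordinal.{u}) < α := lt_of_lt_of_le Ordinal.one_lt_omega0 hω
  set sa := mk (α := α) 1 h1α (fun _ => aa) with hsa
  set sb := mk (α := α) 1 h1α (fun _ => bb) with hsb
  have lsa : len sa = 1 := len_mk _ _ _
  have lsb : len sb = 1 := len_mk _ _ _
  have vsa : val sa 0 = aa := by rw [hsa, val_mk _ _ zero_lt_one]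
  have vsb : val sb 0 = bb := by rw [hsb, val_mk _ _ zero_lt_one]
  have h0sa : len sa ≠ 0 := by rw [lsa]; exact one_ne_zero
  have h0sb : len sb ≠ 0 := by rw [lsb]; exact one_ne_zero
  have hFsa : F hω aa bb σ ρ sa = sa :=
    F_eq_a1 hω h0sa vsa (by rw [lsa]; exact not_le.mpr one_lt_two_ord)
  have hFsb := F_eq_b hω h0sb (by rw [vsb]; exact Ne.symm hab) vsb (σ := σ) (ρ := ρ)
  have hlenFsb : len (F hω aa bb σ ρ sb) = 2 := by
    rw [hFsb, len_mk, lsb, Ordinal.sub_self, add_zero]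
  have hsalt : sa < F hω aa bb σ ρ sb := by
    rw [lt_iff]
    refine ⟨by rw [lsa, hlenFsb]; exact one_lt_two_ord, fun γ hγ => ?_⟩
    rw [lsa] at hγ
    have hγ0 : γ = 0 := Ordinal.lt_one_iff_zero.mp hγ
    subst hγ0
    rw [vsa, hFsb, val_mk _ _ (lt_of_lt_of_le zero_lt_two_ord (le_self_add))]
    simp [zero_lt_two_ord]
  have hlt : sa < sb := (hauto.2 sa sb).mpr (by rw [hFsa]; exact hsalt)
  have := lt_len_of_lt hlt
  rw [lsa, lsb] at this
  exact lt_irrefl _ this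

end CT

/-- For every ordinal `α > 0` and every cardinal `λ > 0` (realized as
a nonempty type `L`), the complete `λ`-ary tree `^{<α}λ` of height `α` is
reversible iff `min{α, λ} < ω`, i.e. iff `α` is finite or `λ` is finite. -/
theorem stmt15 {L : Type u} [Nonempty L] (α : Ordinal.{u}) (hα : 0 < α) :
    Reversible (CompleteTree α L) ↔
      α < Ordinal.omega0 ∨ Cardinal.mk L < Cardinal.aleph0 := by
  constructor
  · intro hrev
    by_contra hc
    push_neg at hc
    obtain ⟨h1, h2⟩ := hc
    have : Infinite L := Cardinal.infinite_iff.mpr h2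
    exact CT.not_reversible h1 hrev
  · rintro (h | h)
    · exact CT.reversible_of_alpha_lt_omega h
    · have : Finite L := Cardinal.lt_aleph0_iff_finite.mp h
      exact CT.reversible_of_finite
end

section
/- Let T be a tree, δ an ordinal with δ+1 < ht(T), G a condensation of the tree T|(δ+1) such that G[L_δ] = L_δ, and for each t ∈ L_δ let f_t be a condensation from the tree [t,·) := {s ∈ T : s ≥ t} onto [G(t),·). Then F := G ∪ ⋃_{t∈L_δ} f_t is a well-defined condensation of T. -/
/- A tree is a partial order in which the set of strict predecessors of every
element is well-ordered. Basic vocabulary: condensations, automorphisms,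
reversibility, heights, levels, nodes, upward closures, branches. -/

universe u v

/-! Every `x` of height `> δ` lies above exactly one `t ∈ L_δ`, so `F` is well defined: `G`
below level `δ + 1`, and `f_t` on `[t,·)`. Since `f_t t = G t` (the least
element of `[t,·)` goes to the least element of `[G t,·)`), the two pieces agree on level `δ`, and
`F` maps elements of height `> δ` to elements of height `> δ`. Injectivity, surjectivity and
monotonicity then reduce to the corresponding properties of `G` and of the `f_t`, using that
the predecessors of an element of a tree form a chain carrying at most one element per level. -/

namespace IsTree

variable {T : Type u} [PartialOrder T] (hT : IsTree T)
include hT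

theorem treeHt_eq_type (t : T) :
    treeHt t = @Ordinal.type {s : T // s < t} (fun a b => (a : T) < (b : T)) (hT t) :=
  dif_pos (hT t)

theorem treeHt_eq_typein {s x : T} (h : s < x) :
    treeHt s = @Ordinal.typein {u : T // u < x} (fun a b => (a : T) < (b : T)) (hT x) ⟨s, h⟩ := by
  have := hT x
  have := hT s
  rw [hT.treeHt_eq_type, ← Ordinal.type_subrel]
  exact Ordinal.type_eq.2 ⟨⟨⟨fun u => ⟨⟨u.1, u.2.trans h⟩, u.2⟩, fun b => ⟨b.1.1, b.2⟩,
    fun _ => rfl, fun _ => rfl⟩, Iff.rfl⟩⟩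

theorem treeHt_strictMono : StrictMono (treeHt : T → Ordinal.{u}) := fun s x h => by
  have := hT x
  rw [hT.treeHt_eq_typein h, hT.treeHt_eq_type]
  exact Ordinal.typein_lt_type _ _

theorem exists_le_treeHt_eq {x : T} {α : Ordinal.{u}} (h : α ≤ treeHt x) :
    ∃ s ≤ x, treeHt s = α := by
  rcases h.lt_or_eq with h | rfl
  · have := hT x
    rw [hT.treeHt_eq_type] at h
    obtain ⟨⟨s, hs⟩, he⟩ := Ordinal.typein_surj _ h
    exact ⟨s, hs.le, by rw [hT.treeHt_eq_typein hs, ← he]⟩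
  · exact ⟨x, le_rfl, rfl⟩

theorem le_total_of_le {s t x : T} (hs : s ≤ x) (ht : t ≤ x) : s ≤ t ∨ t ≤ s := by
  rcases hs.lt_or_eq with hs | rfl
  · rcases ht.lt_or_eq with ht | rfl
    · have := hT x
      rcases trichotomous_of (fun a b : {u : T // u < x} => (a : T) < (b : T)) ⟨s, hs⟩ ⟨t, ht⟩
        with h | h | h
      exacts [Or.inl h.le, Or.inl (congrArg Subtype.val h).le, Or.inr h.le]
    · exact Or.inl hs.le
  · exact Or.inr ht

theorem eq_of_le_of_treeHt_eq {s t x : T} (hs : s ≤ x) (ht : t ≤ x)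
    (h : treeHt s = treeHt t) : s = t := by
  rcases hT.le_total_of_le hs ht with hst | hts
  · exact hst.eq_of_not_lt fun hlt => (hT.treeHt_strictMono hlt).ne h
  · exact (hts.eq_of_not_lt fun hlt => (hT.treeHt_strictMono hlt).ne h.symm).symm

end IsTree

/-- The tree `T|α`. -/
abbrev TreeTrunc (T : Type u) [PartialOrder T] (α : Ordinal.{u}) : Type u :=
  {t : T // treeHt t < α}

theorem not_treeHt_lt_add_one_iff {T : Type u} [PartialOrder T] {δ : Ordinal.{u}} {x : T} :
    ¬ treeHt x < δ + 1 ↔ δ < treeHt x := by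
  rw [not_lt, Order.add_one_le_iff]

theorem IsTree.exists_treeHt_eq_lt {T : Type u} [PartialOrder T] (hT : IsTree T) {δ : Ordinal.{u}}
    {x : T} (hx : ¬ treeHt x < δ + 1) :
    ∃ t : TreeTrunc T (δ + 1), treeHt (t : T) = δ ∧ (t : T) < x := by
  obtain ⟨s, hsx, hs⟩ := hT.exists_le_treeHt_eq (not_treeHt_lt_add_one_iff.1 hx).le
  refine ⟨⟨s, hs ▸ lt_add_one δ⟩, hs, hsx.lt_of_ne ?_⟩
  rintro rfl
  exact hx (hs ▸ lt_add_one δ)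

theorem Set.BijOn.apply_eq_of_Ici {α β : Type*} [PartialOrder α] [PartialOrder β] {g : α → β}
    {a : α} {b : β} (hbij : Set.BijOn g (Set.Ici a) (Set.Ici b))
    (hmono : MonotoneOn g (Set.Ici a)) : g a = b := by
  obtain ⟨x, hx, rfl⟩ := hbij.surjOn (Set.self_mem_Ici (a := b))
  exact le_antisymm (hmono Set.self_mem_Ici hx hx) (hbij.mapsTo Set.self_mem_Ici)

theorem IsCond.strictMono {T : Type u} [PartialOrder T] {f : T → T} (hf : IsCond f) :
    StrictMono f :=
  fun s t => hf.2 s t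

section Glue

variable {T : Type u} [PartialOrder T] (hT : IsTree T) {δ : Ordinal.{u}}
  (G : TreeTrunc T (δ + 1) → TreeTrunc T (δ + 1)) (f : TreeTrunc T (δ + 1) → T → T)

/-- The map `G ∪ ⋃_{t ∈ L_δ} f_t`: above level `δ`, `x` is sent by `f_t` for the `t ∈ L_δ`
below it. -/
noncomputable def glue (x : T) : T :=
  if h : treeHt x < δ + 1 then G ⟨x, h⟩ else f (hT.exists_treeHt_eq_lt h).choose x

theorem glue_coe (t : TreeTrunc T (δ + 1)) : glue hT G f t = G t :=
  dif_pos t.2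

variable {G f}
variable (hf_bij : ∀ t : TreeTrunc T (δ + 1), treeHt (t : T) = δ →
    Set.BijOn (f t) (Set.Ici (t : T)) (Set.Ici (G t : T)))
  (hf_mono : ∀ t : TreeTrunc T (δ + 1), treeHt (t : T) = δ → StrictMonoOn (f t) (Set.Ici (t : T)))
include hf_bij hf_mono

theorem glue_of_le {t : TreeTrunc T (δ + 1)} (ht : treeHt (t : T) = δ) {x : T} (hx : (t : T) ≤ x) :
    glue hT G f x = f t x := by
  by_cases hlow : treeHt x < δ + 1
  · obtain rfl : (t : T) = x := hx.eq_of_not_lt fun hlt =>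
      not_treeHt_lt_add_one_iff.2 (ht ▸ hT.treeHt_strictMono hlt) hlow
    rw [glue_coe, (hf_bij t ht).apply_eq_of_Ici (hf_mono t ht).monotoneOn]
  · obtain ⟨hroot, hroot_le⟩ := (hT.exists_treeHt_eq_lt hlow).choose_spec
    rw [glue, dif_neg hlow,
      Subtype.ext (hT.eq_of_le_of_treeHt_eq hroot_le.le hx (hroot.trans ht.symm))]

theorem lt_glue {t : TreeTrunc T (δ + 1)} (ht : treeHt (t : T) = δ) {x : T} (hx : (t : T) < x) :
    (G t : T) < glue hT G f x := by
  rw [glue_of_le hT hf_bij hf_mono ht hx.le,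
    ← (hf_bij t ht).apply_eq_of_Ici (hf_mono t ht).monotoneOn]
  exact hf_mono t ht Set.self_mem_Ici hx.le hx

theorem glue_strictMono (hG : IsCond G) : StrictMono (glue hT G f) := by
  intro x y hxy
  by_cases hy : treeHt y < δ + 1
  · have hx : treeHt x < δ + 1 := (hT.treeHt_strictMono hxy).trans hy
    rw [glue_coe hT G f ⟨x, hx⟩, glue_coe hT G f ⟨y, hy⟩]
    exact hG.strictMono (show (⟨x, hx⟩ : TreeTrunc T (δ + 1)) < ⟨y, hy⟩ from hxy)
  obtain ⟨t, ht, hty⟩ := hT.exists_treeHt_eq_lt hy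
  rcases hT.le_total_of_le hxy.le hty.le with hxt | htx
  · calc glue hT G f x ≤ glue hT G f t := by
          rw [glue_coe hT G f ⟨x, t.2.trans_le' (hT.treeHt_strictMono.monotone hxt)⟩, glue_coe]
          exact hG.strictMono.monotone hxt
      _ < glue hT G f y := by
          rw [glue_coe]; exact lt_glue hT hf_bij hf_mono ht hty
  · rw [glue_of_le hT hf_bij hf_mono ht htx, glue_of_le hT hf_bij hf_mono ht hty.le]
    exact hf_mono t ht htx hty.le hxy

theorem treeHt_glue_lt_add_one_iff
    (hG_level : ∀ t : TreeTrunc T (δ + 1), treeHt (t : T) = δ → treeHt (G t : T) = δ) (x : T) :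
    treeHt (glue hT G f x) < δ + 1 ↔ treeHt x < δ + 1 := by
  constructor
  · intro h
    by_contra hx
    obtain ⟨t, ht, htx⟩ := hT.exists_treeHt_eq_lt hx
    have hGt := hT.treeHt_strictMono (lt_glue hT hf_bij hf_mono ht htx)
    rw [hG_level t ht] at hGt
    exact not_treeHt_lt_add_one_iff.2 hGt h
  · intro h
    rw [glue_coe hT G f ⟨x, h⟩]
    exact (G ⟨x, h⟩).2

theorem glue_injective (hG_inj : Function.Injective G)
    (hG_level : ∀ t : TreeTrunc T (δ + 1), treeHt (t : T) = δ → treeHt (G t : T) = δ) :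
    Function.Injective (glue hT G f) := by
  have hlow_iff := treeHt_glue_lt_add_one_iff hT hf_bij hf_mono hG_level
  intro x y hxy
  by_cases hx : treeHt x < δ + 1
  · have hy : treeHt y < δ + 1 := (hlow_iff y).1 (hxy ▸ (hlow_iff x).2 hx)
    rw [glue_coe hT G f ⟨x, hx⟩, glue_coe hT G f ⟨y, hy⟩] at hxy
    exact congrArg Subtype.val (hG_inj (Subtype.ext hxy))
  · have hy : ¬ treeHt y < δ + 1 := fun hy => hx ((hlow_iff x).1 (hxy ▸ (hlow_iff y).2 hy))
    obtain ⟨t, ht, htx⟩ := hT.exists_treeHt_eq_lt hx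
    obtain ⟨s, hs, hsy⟩ := hT.exists_treeHt_eq_lt hy
    obtain rfl : t = s := hG_inj <| Subtype.ext <| hT.eq_of_le_of_treeHt_eq
      (lt_glue hT hf_bij hf_mono ht htx).le (hxy ▸ (lt_glue hT hf_bij hf_mono hs hsy).le)
      ((hG_level t ht).trans (hG_level s hs).symm)
    rw [glue_of_le hT hf_bij hf_mono ht htx.le, glue_of_le hT hf_bij hf_mono ht hsy.le] at hxy
    exact (hf_bij t ht).injOn htx.le hsy.le hxy

theorem glue_surjective (hG_surj : Function.Surjective G)
    (hGδ : (fun t : TreeTrunc T (δ + 1) => (G t : T)) ''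
      {t : TreeTrunc T (δ + 1) | treeHt (t : T) = δ} = level T δ) :
    Function.Surjective (glue hT G f) := by
  intro z
  by_cases hz : treeHt z < δ + 1
  · obtain ⟨w, hw⟩ := hG_surj ⟨z, hz⟩
    exact ⟨w, by rw [glue_coe, hw]⟩
  · obtain ⟨s, hs, hsz⟩ := hT.exists_treeHt_eq_lt hz
    have hs_level : (s : T) ∈ level T δ := hs
    rw [← hGδ] at hs_level
    obtain ⟨u, hu, hus⟩ := hs_level
    obtain ⟨w, hw, rfl⟩ := (hf_bij u hu).surjOn (hus.le.trans hsz.le)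
    exact ⟨w, glue_of_le hT hf_bij hf_mono hu hw⟩

end Glue

theorem stmt16_general {T : Type u} [PartialOrder T] (hT : IsTree T)
    (δ : Ordinal.{u})
    (G : {t : T // treeHt t < δ + 1} → {t : T // treeHt t < δ + 1})
    (hG : IsCond G)
    (hGδ : (fun t : {t : T // treeHt t < δ + 1} => (G t : T)) ''
        {t : {t : T // treeHt t < δ + 1} | treeHt (t : T) = δ} = level T δ)
    (f : {t : T // treeHt t < δ + 1} → T → T)
    (hf : ∀ t : {t : T // treeHt t < δ + 1}, treeHt (t : T) = δ →
      Set.BijOn (f t) (Set.Ici (t : T)) (Set.Ici (G t : T)) ∧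
      ∀ x y : T, x ∈ Set.Ici (t : T) → y ∈ Set.Ici (t : T) → x < y →
        f t x < f t y) :
    ∃ F : T → T, IsCond F ∧
      (∀ t : {t : T // treeHt t < δ + 1}, F (t : T) = (G t : T)) ∧
      (∀ t : {t : T // treeHt t < δ + 1}, treeHt (t : T) = δ →
        ∀ x ∈ Set.Ici (t : T), F x = f t x) := by
  have hf_bij := fun t ht => (hf t ht).1
  have hf_mono : ∀ t : TreeTrunc T (δ + 1), treeHt (t : T) = δ →
      StrictMonoOn (f t) (Set.Ici (t : T)) :=
    fun t ht x hx y hy => (hf t ht).2 x y hx hy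
  have hG_level : ∀ t : TreeTrunc T (δ + 1), treeHt (t : T) = δ → treeHt (G t : T) = δ :=
    fun t ht => hGδ.subset ⟨t, ht, rfl⟩
  refine ⟨glue hT G f, ⟨⟨?_, ?_⟩, fun _ _ h => glue_strictMono hT hf_bij hf_mono hG h⟩,
    glue_coe hT G f, fun t ht x hx => glue_of_le hT hf_bij hf_mono ht hx⟩
  · exact glue_injective hT hf_bij hf_mono hG.1.1 hG_level
  · exact glue_surjective hT hf_bij hf_mono hG.1.2 hGδ

/-- Let `T` be a tree, `δ` an ordinal with `δ + 1 < ht(T)`, `G` a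
condensation of the tree `T|(δ+1)` with `G[L_δ] = L_δ`, and for each `t ∈ L_δ` let
`f_t` be a condensation from `[t,·)` onto `[G(t),·)`. Then
`F := G ∪ ⋃_{t∈L_δ} f_t` is a well-defined condensation of `T`. -/
theorem stmt16 {T : Type u} [PartialOrder T] (hT : IsTree T)
    (δ : Ordinal.{u}) (hδ : δ + 1 < treeHeight T)
    (G : {t : T // treeHt t < δ + 1} → {t : T // treeHt t < δ + 1})
    (hG : IsCond G)
    (hGδ : (fun t : {t : T // treeHt t < δ + 1} => (G t : T)) ''
        {t : {t : T // treeHt t < δ + 1} | treeHt (t : T) = δ} = level T δ)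
    (f : {t : T // treeHt t < δ + 1} → T → T)
    (hf : ∀ t : {t : T // treeHt t < δ + 1}, treeHt (t : T) = δ →
      Set.BijOn (f t) (Set.Ici (t : T)) (Set.Ici (G t : T)) ∧
      ∀ x y : T, x ∈ Set.Ici (t : T) → y ∈ Set.Ici (t : T) → x < y →
        f t x < f t y) :
    ∃ F : T → T, IsCond F ∧
      (∀ t : {t : T // treeHt t < δ + 1}, F (t : T) = (G t : T)) ∧
      (∀ t : {t : T // treeHt t < δ + 1}, treeHt (t : T) = δ →
        ∀ x ∈ Set.Ici (t : T), F x = f t x) :=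
  stmt16_general hT δ G hG hGδ f hf
end

section
/- Let m, n be integers with 0 < m < n and let λ be an infinite cardinal. Then there exist injections f : ^{<m}λ → ^{<n}λ and g : ^{<n}λ → ^{<n}λ, each of which is an order isomorphism onto its image, such that f[^{<m}λ] and g[^{<n}λ] are disjoint and f[^{<m}λ] ∪ g[^{<n}λ] = ^{<n}λ. -/
/- A tree is a partial order in which the set of strict predecessors of every
element is well-ordered. Basic vocabulary: condensations, automorphisms,
reversibility, heights, levels, nodes, upward closures, branches. -/

universe u v

namespace Stmt18Aux

variable {L : Type u}

def Gd (β : Ordinal.{u}) (s : Set (Ordinal.{u} × L)) : Prop :=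
  (∀ p ∈ s, p.1 < β) ∧ ∀ γ < β, ∃! x : L, (γ, x) ∈ s

def Fset (k : ℕ) (a₀ : L) (s : Set (Ordinal.{u} × L)) : Set (Ordinal.{u} × L) :=
  {p | (p.1 < (k : Ordinal.{u}) ∧ p.2 = a₀) ∨ ∃ γ, (γ, p.2) ∈ s ∧ p.1 = (k : Ordinal.{u}) + γ}

def Rset (k' : ℕ) (e : L → L) (s : Set (Ordinal.{u} × L)) : Set (Ordinal.{u} × L) :=
  {p | (p ∈ s ∧ p.1 ≠ (k' : Ordinal.{u})) ∨
       (p.1 = (k' : Ordinal.{u}) ∧ ∃ y, ((k' : Ordinal.{u}), y) ∈ s ∧ p.2 = e y)}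

def Cnd (k' : ℕ) (a₀ : L) (s : Set (Ordinal.{u} × L)) : Prop :=
  (∀ γ < (k' : Ordinal.{u}), (γ, a₀) ∈ s) ∧ ∃ y, ((k' : Ordinal.{u}), y) ∈ s

theorem mem_Fset {k : ℕ} {a₀ : L} {s : Set (Ordinal.{u} × L)} {γ : Ordinal.{u}} {x : L} :
    (γ, x) ∈ Fset k a₀ s ↔
      (γ < (k : Ordinal.{u}) ∧ x = a₀) ∨ ∃ δ, (δ, x) ∈ s ∧ γ = (k : Ordinal.{u}) + δ :=
  Iff.rfl

theorem mem_Rset {k' : ℕ} {e : L → L} {s : Set (Ordinal.{u} × L)} {γ : Ordinal.{u}} {x : L} :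
    (γ, x) ∈ Rset k' e s ↔
      ((γ, x) ∈ s ∧ γ ≠ (k' : Ordinal.{u})) ∨
      (γ = (k' : Ordinal.{u}) ∧ ∃ y, ((k' : Ordinal.{u}), y) ∈ s ∧ x = e y) :=
  Iff.rfl

theorem not_add_lt_self {a b : Ordinal.{u}} (h : a + b < a) : False :=
  absurd (lt_of_le_of_lt (le_self_add) h) (lt_irrefl _)

theorem fset_valid (k : ℕ) (a₀ : L) {β : Ordinal.{u}} {s : Set (Ordinal.{u} × L)}
    (h : Gd β s) : Gd ((k : Ordinal.{u}) + β) (Fset k a₀ s) := by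
  constructor
  · rintro ⟨γ, x⟩ hp
    rcases mem_Fset.1 hp with ⟨h1, _⟩ | ⟨δ, hδ, rfl⟩
    · exact lt_of_lt_of_le h1 (le_self_add)
    · exact (add_lt_add_iff_left _).2 (h.1 _ hδ)
  · intro γ hγ
    rcases lt_or_ge γ (k : Ordinal.{u}) with hlt | hle
    · refine ⟨a₀, mem_Fset.2 (Or.inl ⟨hlt, rfl⟩), fun x hx => ?_⟩
      rcases mem_Fset.1 hx with ⟨_, hx⟩ | ⟨δ, _, rfl⟩
      · exact hx
      · exact absurd hlt (by exact fun hh => not_add_lt_self hh)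
    · obtain ⟨δ, rfl⟩ : ∃ δ, γ = (k : Ordinal.{u}) + δ :=
        ⟨γ - k, (Ordinal.add_sub_cancel_of_le hle).symm⟩
      have hδβ : δ < β := (add_lt_add_iff_left _).1 hγ
      obtain ⟨x, hx, hux⟩ := h.2 δ hδβ
      refine ⟨x, mem_Fset.2 (Or.inr ⟨δ, hx, rfl⟩), fun y hy => ?_⟩
      rcases mem_Fset.1 hy with ⟨hy1, _⟩ | ⟨δ', hy', hδ'⟩
      · exact absurd hy1 (fun hh => not_add_lt_self hh)
      · rw [← (add_right_inj _).1 hδ'] at hy'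
        exact hux y hy'

theorem fset_mono (k : ℕ) (a₀ : L) (s s' : Set (Ordinal.{u} × L)) :
    s ⊆ s' ↔ Fset k a₀ s ⊆ Fset k a₀ s' := by
  constructor
  · rintro hss ⟨γ, x⟩ hp
    rcases mem_Fset.1 hp with ⟨h1, h2⟩ | ⟨δ, hδ, rfl⟩
    · exact mem_Fset.2 (Or.inl ⟨h1, h2⟩)
    · exact mem_Fset.2 (Or.inr ⟨δ, hss hδ, rfl⟩)
  · intro hFF p hp
    have hmem : ((k : Ordinal.{u}) + p.1, p.2) ∈ Fset k a₀ s :=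
      mem_Fset.2 (Or.inr ⟨p.1, by simpa using hp, rfl⟩)
    rcases mem_Fset.1 (hFF hmem) with ⟨h1, _⟩ | ⟨δ, hδ, hp'⟩
    · exact absurd h1 (fun hh => not_add_lt_self hh)
    · rw [← (add_right_inj _).1 hp'] at hδ
      simpa using hδ

theorem rset_valid (k' : ℕ) (e : L → L)
    {β : Ordinal.{u}} {s : Set (Ordinal.{u} × L)} (h : Gd β s)
    (hk' : ∃ y, ((k' : Ordinal.{u}), y) ∈ s) : Gd β (Rset k' e s) := by
  obtain ⟨y₀, hy₀⟩ := hk'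
  have hk'β : (k' : Ordinal.{u}) < β := h.1 _ hy₀
  constructor
  · rintro ⟨γ, x⟩ hp
    rcases mem_Rset.1 hp with ⟨h1, _⟩ | ⟨rfl, _⟩
    · exact h.1 _ h1
    · exact hk'β
  · intro γ hγ
    rcases eq_or_ne γ (k' : Ordinal.{u}) with rfl | hne
    · refine ⟨e y₀, mem_Rset.2 (Or.inr ⟨rfl, y₀, hy₀, rfl⟩), fun x hx => ?_⟩
      rcases mem_Rset.1 hx with ⟨_, hne⟩ | ⟨_, y, hy, rfl⟩
      · exact absurd rfl hne
      · obtain ⟨z, hz, huz⟩ := h.2 _ hk'β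
        rw [huz y hy, huz y₀ hy₀]
    · obtain ⟨x, hx, hux⟩ := h.2 γ hγ
      refine ⟨x, mem_Rset.2 (Or.inl ⟨hx, hne⟩), fun z hz => ?_⟩
      rcases mem_Rset.1 hz with ⟨hz1, _⟩ | ⟨rfl, _⟩
      · exact hux z hz1
      · exact absurd rfl hne


theorem cnd_mono {k' : ℕ} {a₀ : L} {s s' : Set (Ordinal.{u} × L)} (hss : s ⊆ s')
    (hc : Cnd k' a₀ s) : Cnd k' a₀ s' :=
  ⟨fun γ hγ => hss (hc.1 γ hγ), hc.2.imp fun _ hy => hss hy⟩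

/-- if `s ⊆ u`, `u` has `a₀`'s below `k'`, and `s` is valid but does not satisfy `Cnd`,
then nothing in `s` sits at a position `≥ k'`. -/
theorem noK {k' : ℕ} {a₀ : L} {β β' : Ordinal.{u}} {s u : Set (Ordinal.{u} × L)}
    (hs : Gd β s) (hu : Gd β' u) (hsu : s ⊆ u)
    (hT : ∀ γ < (k' : Ordinal.{u}), (γ, a₀) ∈ u)
    (hc : ¬ Cnd k' a₀ s) : ∀ p ∈ s, p.1 ≠ (k' : Ordinal.{u}) := by
  rintro ⟨γ, x⟩ hp rfl
  apply hc
  refine ⟨fun δ hδ => ?_, ⟨x, hp⟩⟩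
  have hδβ : δ < β := lt_trans hδ (hs.1 _ hp)
  obtain ⟨z, hz, _⟩ := hs.2 δ hδβ
  have hzu : (δ, z) ∈ u := hsu hz
  have haδ : (δ, a₀) ∈ u := hT δ hδ
  obtain ⟨w, hw, huw⟩ := hu.2 δ (hu.1 _ hzu)
  have : z = a₀ := by rw [huw z hzu, huw a₀ haδ]
  rwa [this] at hz

theorem rset_iff {k' : ℕ} {e : L → L} (he : Function.Injective e)
    {s s' : Set (Ordinal.{u} × L)}
    (hc : ∃ y, ((k' : Ordinal.{u}), y) ∈ s) :
    s ⊆ s' ↔ Rset k' e s ⊆ Rset k' e s' := by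
  constructor
  · rintro hss ⟨γ, x⟩ hp
    rcases mem_Rset.1 hp with ⟨h1, h2⟩ | ⟨rfl, y, hy, rfl⟩
    · exact mem_Rset.2 (Or.inl ⟨hss h1, h2⟩)
    · exact mem_Rset.2 (Or.inr ⟨rfl, y, hss hy, rfl⟩)
  · rintro hRR ⟨γ, x⟩ hp
    rcases eq_or_ne γ (k' : Ordinal.{u}) with rfl | hne
    · have : ((k' : Ordinal.{u}), e x) ∈ Rset k' e s := mem_Rset.2 (Or.inr ⟨rfl, x, hp, rfl⟩)
      rcases mem_Rset.1 (hRR this) with ⟨_, hne⟩ | ⟨_, y, hy, hxy⟩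
      · exact absurd rfl hne
      · rwa [he hxy]
    · have : (γ, x) ∈ Rset k' e s := mem_Rset.2 (Or.inl ⟨hp, hne⟩)
      rcases mem_Rset.1 (hRR this) with ⟨h1, _⟩ | ⟨h1, _⟩
      · exact h1
      · exact absurd h1 hne

theorem sub_Rset_of_cnd {k' : ℕ} {a₀ : L} {e : L → L} {s : Set (Ordinal.{u} × L)}
    (hc : Cnd k' a₀ s) : ∀ γ < (k' : Ordinal.{u}), (γ, a₀) ∈ Rset k' e s :=
  fun γ hγ => mem_Rset.2 (Or.inl ⟨hc.1 γ hγ, ne_of_lt hγ⟩)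

theorem exK_Rset {k' : ℕ} {e : L → L} {s : Set (Ordinal.{u} × L)}
    (hc : ∃ y, ((k' : Ordinal.{u}), y) ∈ s) :
    ∃ y, ((k' : Ordinal.{u}), y) ∈ Rset k' e s := by
  obtain ⟨y, hy⟩ := hc
  exact ⟨e y, mem_Rset.2 (Or.inr ⟨rfl, y, hy, rfl⟩)⟩

theorem mixed_iff {k' : ℕ} {a₀ : L} {e : L → L} (he : Function.Injective e)
    {β β' : Ordinal.{u}} {s s' : Set (Ordinal.{u} × L)}
    (hs : Gd β s) (hs' : Gd β' s')
    (hc : ¬ Cnd k' a₀ s) (hc' : Cnd k' a₀ s') :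
    s ⊆ s' ↔ s ⊆ Rset k' e s' := by
  constructor
  · intro hss p hp
    have hne := noK hs hs' hss hc'.1 hc p hp
    exact Or.inl ⟨hss hp, hne⟩
  · intro hsR p hp
    have hGR : Gd β' (Rset k' e s') := rset_valid k' e hs' hc'.2
    have hne := noK hs hGR hsR (sub_Rset_of_cnd hc') hc p hp
    rcases hsR hp with ⟨h1, _⟩ | ⟨h1, _⟩
    · exact h1
    · exact absurd h1 hne

theorem cnd_notcnd {k' : ℕ} {a₀ : L} {e : L → L} {s s' : Set (Ordinal.{u} × L)}
    (hc : Cnd k' a₀ s) (hc' : ¬ Cnd k' a₀ s') :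
    ¬ s ⊆ s' ∧ ¬ Rset k' e s ⊆ s' := by
  constructor
  · exact fun hss => hc' (cnd_mono hss hc)
  · intro hRs
    apply hc'
    refine ⟨fun γ hγ => hRs (sub_Rset_of_cnd hc γ hγ), ?_⟩
    obtain ⟨y, hy⟩ := exK_Rset (e := e) hc.2
    exact ⟨y, hRs hy⟩



theorem le_iff' {α : Ordinal.{u}} (x y : CompleteTree α L) : x ≤ y ↔ x.val ⊆ y.val := Iff.rfl

theorem prop_iff {α : Ordinal.{u}} (s : Set (Ordinal.{u} × L)) :
    (∃ β < α, (∀ p ∈ s, p.1 < β) ∧ ∀ γ < β, ∃! x : L, (γ, x) ∈ s) ↔ ∃ β < α, Gd β s := Iff.rfl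

end Stmt18Aux

open Stmt18Aux

/-- Let `0 < m < n` be integers and `λ` an infinite cardinal
(realized as an infinite type `L`). Then there are injections
`f : ^{<m}λ → ^{<n}λ` and `g : ^{<n}λ → ^{<n}λ`, each an order isomorphism onto
its image, whose images are disjoint and partition `^{<n}λ`. -/
theorem stmt18 {L : Type u} [Infinite L] (m n : ℕ) (hm : 0 < m) (hmn : m < n) :
    ∃ (f : CompleteTree (m : Ordinal.{u}) L → CompleteTree (n : Ordinal.{u}) L)
      (g : CompleteTree (n : Ordinal.{u}) L → CompleteTree (n : Ordinal.{u}) L),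
      Function.Injective f ∧ Function.Injective g ∧
      (∀ x y, x ≤ y ↔ f x ≤ f y) ∧ (∀ x y, x ≤ y ↔ g x ≤ g y) ∧
      Set.range f ∩ Set.range g = ∅ ∧
      Set.range f ∪ Set.range g = Set.univ := by
  classical
  set k : ℕ := n - m with hkdef
  set k' : ℕ := n - m - 1 with hk'def
  have hkk' : k = k' + 1 := by omega
  have hnk : n = k + m := by omega
  obtain ⟨a₀⟩ : Nonempty L := inferInstance
  obtain ⟨E⟩ : Nonempty (↥({a₀}ᶜ : Set L) ≃ L) :=
    Cardinal.eq.1 (Cardinal.mk_compl_of_infinite ({a₀} : Set L)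
      (by simpa using lt_of_lt_of_le Cardinal.one_lt_aleph0 (Cardinal.aleph0_le_mk L)))
  set e : L → L := fun x => (E.symm x : L) with he_def
  have he : Function.Injective e := fun x y h => E.symm.injective (Subtype.ext h)
  have hea : ∀ x, e x ≠ a₀ := fun x => by
    have h2 := (E.symm x).2
    simp only [Set.mem_compl_iff, Set.mem_singleton_iff] at h2
    exact h2
  have hesurj : ∀ y : L, y ≠ a₀ → ∃ x, e x = y := fun y hy =>
    ⟨E ⟨y, by simp [hy]⟩, by simp [he_def]⟩
  -- ordinal facts
  have hkc : ((n : ℕ) : Ordinal.{u}) = (k : Ordinal.{u}) + (m : Ordinal.{u}) := by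
    rw [hnk, Nat.cast_add]
  have hk'k : (k' : Ordinal.{u}) < (k : Ordinal.{u}) := by
    exact_mod_cast (by omega : k' < k)
  have hsucc : (k : Ordinal.{u}) = (k' : Ordinal.{u}) + 1 := by
    rw [hkk', Nat.cast_add, Nat.cast_one]
  have hlek' : ∀ γ : Ordinal.{u}, γ < (k : Ordinal.{u}) → γ < (k' : Ordinal.{u}) ∨ γ = (k' : Ordinal.{u}) := by
    intro γ hγ
    rw [hsucc, Ordinal.add_one_eq_succ, Order.lt_succ_iff] at hγ
    exact lt_or_eq_of_le hγ
  -- validity of the two maps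
  have fval : ∀ s : CompleteTree (m : Ordinal.{u}) L,
      ∃ β < (n : Ordinal.{u}), Gd β (Fset k a₀ s.val) := by
    intro s
    obtain ⟨β, hβ, hGd⟩ := s.2
    refine ⟨(k : Ordinal.{u}) + β, ?_, fset_valid k a₀ hGd⟩
    rw [hkc]
    exact (add_lt_add_iff_left _).2 hβ
  have gval : ∀ s : CompleteTree (n : Ordinal.{u}) L, Cnd k' a₀ s.val →
      ∃ β < (n : Ordinal.{u}), Gd β (Rset k' e s.val) := by
    intro s hc
    obtain ⟨β, hβ, hGd⟩ := s.2
    exact ⟨β, hβ, rset_valid k' e hGd hc.2⟩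
  set f : CompleteTree (m : Ordinal.{u}) L → CompleteTree (n : Ordinal.{u}) L :=
    fun s => ⟨Fset k a₀ s.val, fval s⟩ with hf
  set g : CompleteTree (n : Ordinal.{u}) L → CompleteTree (n : Ordinal.{u}) L :=
    fun s => if h : Cnd k' a₀ s.val then ⟨Rset k' e s.val, gval s h⟩ else s with hg
  have hgval : ∀ s, (g s).val = if Cnd k' a₀ s.val then Rset k' e s.val else s.val := by
    intro s
    rw [hg]
    dsimp only
    by_cases h : Cnd k' a₀ s.val
    · exact (congrArg Subtype.val (dif_pos h)).trans (if_pos h).symm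
    · exact (congrArg Subtype.val (dif_neg h)).trans (if_neg h).symm
  -- monotonicity of f
  have hfm : ∀ x y, x ≤ y ↔ f x ≤ f y := by
    intro x y
    rw [hf, le_iff']
    exact fset_mono k a₀ x.val y.val
  -- monotonicity of g
  have hgm : ∀ x y, x ≤ y ↔ g x ≤ g y := by
    intro x y
    rw [le_iff', le_iff', hgval, hgval]
    obtain ⟨β, hβ, hGx⟩ := x.2
    obtain ⟨β', hβ', hGy⟩ := y.2
    by_cases hx : Cnd k' a₀ x.val <;> by_cases hy : Cnd k' a₀ y.val
    · rw [if_pos hx, if_pos hy]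
      exact rset_iff he hx.2
    · rw [if_pos hx, if_neg hy]
      obtain ⟨h1, h2⟩ := cnd_notcnd (e := e) hx hy
      exact iff_of_false h1 h2
    · rw [if_neg hx, if_pos hy]
      exact mixed_iff he hGx hGy hx hy
    · rw [if_neg hx, if_neg hy]
  -- injectivity
  have hfinj : Function.Injective f := by
    intro x y hxy
    exact le_antisymm ((hfm x y).2 (le_of_eq hxy)) ((hfm y x).2 (le_of_eq hxy.symm))
  have hginj : Function.Injective g := by
    intro x y hxy
    exact le_antisymm ((hgm x y).2 (le_of_eq hxy)) ((hgm y x).2 (le_of_eq hxy.symm))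
  -- range of f
  have hrf : ∀ u : CompleteTree (n : Ordinal.{u}) L,
      (∀ γ < (k : Ordinal.{u}), ((γ, a₀) : Ordinal.{u} × L) ∈ u.val) ↔ u ∈ Set.range f := by
    intro u
    constructor
    · intro hT
      obtain ⟨β, hβ, hGu⟩ := u.2
      have hkβ : (k : Ordinal.{u}) ≤ β := by
        by_contra hcon
        push_neg at hcon
        exact absurd (hGu.1 _ (hT β hcon)) (lt_irrefl _)
      obtain ⟨δ, hδeq⟩ : ∃ δ, β = (k : Ordinal.{u}) + δ :=
        ⟨β - k, (Ordinal.add_sub_cancel_of_le hkβ).symm⟩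
      have hδm : δ < (m : Ordinal.{u}) := by
        rw [hδeq, hkc] at hβ
        exact (add_lt_add_iff_left _).1 hβ
      set sv : Set (Ordinal.{u} × L) := {p | ((k : Ordinal.{u}) + p.1, p.2) ∈ u.val} with hsv
      have hGs : Gd δ sv := by
        constructor
        · intro p hp
          have := hGu.1 _ hp
          rw [hδeq] at this
          exact (add_lt_add_iff_left _).1 this
        · intro γ hγ
          have h1 : (k : Ordinal.{u}) + γ < β := by
            rw [hδeq]; exact (add_lt_add_iff_left _).2 hγ
          exact hGu.2 _ h1
      refine ⟨⟨sv, δ, hδm, hGs⟩, ?_⟩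
      rw [hf]
      apply Subtype.ext
      apply Set.ext
      rintro ⟨γ, z⟩
      constructor
      · intro hp
        rcases mem_Fset.1 hp with ⟨h1, rfl⟩ | ⟨δ', hδ', rfl⟩
        · exact hT γ h1
        · exact hδ'
      · intro hp
        have hγβ : γ < β := hGu.1 _ hp
        rcases lt_or_ge γ (k : Ordinal.{u}) with hlt | hle
        · have hz : z = a₀ := by
            have hβγ : γ < β := hγβ
            obtain ⟨w, hw, huw⟩ := hGu.2 γ hβγ
            rw [huw z hp, huw a₀ (hT γ hlt)]
          exact mem_Fset.2 (Or.inl ⟨hlt, hz⟩)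
        · obtain ⟨δ', rfl⟩ : ∃ δ', γ = (k : Ordinal.{u}) + δ' :=
            ⟨γ - k, (Ordinal.add_sub_cancel_of_le hle).symm⟩
          exact mem_Fset.2 (Or.inr ⟨δ', hp, rfl⟩)
    · rintro ⟨s, rfl⟩
      intro γ hγ
      rw [hf]
      exact mem_Fset.2 (Or.inl ⟨hγ, rfl⟩)
  -- range of g
  have hrg : ∀ u : CompleteTree (n : Ordinal.{u}) L,
      (¬ ∀ γ < (k : Ordinal.{u}), ((γ, a₀) : Ordinal.{u} × L) ∈ u.val) ↔ u ∈ Set.range g := by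
    intro u
    constructor
    · intro hnT
      by_cases hcu : Cnd k' a₀ u.val
      · have hk'a : ((k' : Ordinal.{u}), a₀) ∉ u.val := by
          intro h'
          apply hnT
          intro γ hγ
          rcases hlek' γ hγ with h | rfl
          · exact hcu.1 γ h
          · exact h'
        obtain ⟨y₀, hy₀⟩ := hcu.2
        have hy₀a : y₀ ≠ a₀ := by
          rintro rfl
          exact hk'a hy₀
        obtain ⟨x, hex⟩ := hesurj y₀ hy₀a
        obtain ⟨β, hβ, hGu⟩ := u.2
        -- the preimage: replace position k' by x
        set sv : Set (Ordinal.{u} × L) := Rset k' (fun _ => x) u.val with hsv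
        have hGs : Gd β sv := rset_valid k' (fun _ => x) hGu hcu.2
        have hcs : Cnd k' a₀ sv := by
          constructor
          · intro γ hγ
            exact mem_Rset.2 (Or.inl ⟨hcu.1 γ hγ, ne_of_lt hγ⟩)
          · exact ⟨x, mem_Rset.2 (Or.inr ⟨rfl, y₀, hy₀, rfl⟩)⟩
        refine ⟨⟨sv, β, hβ, hGs⟩, ?_⟩
        apply Subtype.ext
        refine (hgval _).trans ?_
        rw [if_pos hcs]
        apply Set.ext
        rintro ⟨γ, z⟩
        constructor
        · intro hp
          rcases mem_Rset.1 hp with ⟨h1, hne⟩ | ⟨rfl, y, hy, rfl⟩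
          · rcases mem_Rset.1 h1 with ⟨h2, _⟩ | ⟨h2, _⟩
            · exact h2
            · exact absurd h2 hne
          · rcases mem_Rset.1 hy with ⟨_, hne⟩ | ⟨_, y', _, rfl⟩
            · exact absurd rfl hne
            · rw [hex]
              exact hy₀
        · intro hp
          rcases eq_or_ne γ (k' : Ordinal.{u}) with rfl | hne
          · have hz : z = y₀ := by
              obtain ⟨w, hw, huw⟩ := hGu.2 _ (hGu.1 _ hy₀)
              rw [huw z hp, huw y₀ hy₀]
            refine mem_Rset.2 (Or.inr ⟨rfl, x, ?_, by rw [hz, hex]⟩)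
            exact mem_Rset.2 (Or.inr ⟨rfl, y₀, hy₀, rfl⟩)
          · refine mem_Rset.2 (Or.inl ⟨?_, hne⟩)
            exact mem_Rset.2 (Or.inl ⟨hp, hne⟩)
      · refine ⟨u, ?_⟩
        apply Subtype.ext
        rw [hgval, if_neg hcu]
    · rintro ⟨s, rfl⟩ hT
      by_cases hcs : Cnd k' a₀ s.val
      · have h1 : ((k' : Ordinal.{u}), a₀) ∈ (g s).val := hT _ hk'k
        rw [hgval, if_pos hcs] at h1
        rcases mem_Rset.1 h1 with ⟨_, hne⟩ | ⟨_, y, _, hay⟩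
        · exact hne rfl
        · exact hea y hay.symm
      · apply hcs
        have hgs : (g s).val = s.val := by rw [hgval, if_neg hcs]
        rw [hgs] at hT
        exact ⟨fun γ hγ => hT γ (lt_trans hγ hk'k), ⟨a₀, hT _ hk'k⟩⟩
  refine ⟨f, g, hfinj, hginj, hfm, hgm, ?_, ?_⟩
  · apply Set.eq_empty_iff_forall_notMem.2
    rintro u ⟨huf, hug⟩
    exact ((hrg u).2 hug) ((hrf u).2 huf)
  · apply Set.eq_univ_iff_forall.2
    intro u
    by_cases hT : ∀ γ < (k : Ordinal.{u}), ((γ, a₀) : Ordinal.{u} × L) ∈ u.val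
    · exact Or.inl ((hrf u).1 hT)
    · exact Or.inr ((hrg u).1 hT)
end

section
/- Let λ be an infinite cardinal, I a set, ⟨n_i : i ∈ I⟩ a family of positive integers, and T := ⋃·_{i∈I} ^{<n_i}λ the disjoint union of the complete λ-ary trees of heights n_i. Then T is reversible if and only if either (i) the family ⟨n_i : i ∈ I⟩ is finite-to-one (for every k ∈ ℕ the set {i ∈ I : n_i = k} is finite), or (ii) there exists k ∈ ℕ such that the set {i ∈ I : n_i ≠ k} is finite and n_i < k for every i with n_i ≠ k. -/
/- A tree is a partial order in which the set of strict predecessors of every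
element is well-ordered. Basic vocabulary: condensations, automorphisms,
reversibility, heights, levels, nodes, upward closures, branches. -/

universe u v

section transfer
variable {A : Type*} {B : Type*} [PartialOrder A] [PartialOrder B]

theorem reversible_of_equiv (g : A ≃ B) (hg : ∀ s t : A, s < t ↔ g s < g t)
    (hA : Reversible A) : Reversible B := by
  intro f hf
  have hsymm : ∀ u v : B, g.symm u < g.symm v ↔ u < v := by
    intro u v
    rw [hg]
    simp
  have hcond : IsCond (g.symm ∘ f ∘ g) := by
    refine ⟨(g.symm.bijective.comp hf.1).comp g.bijective, ?_⟩
    intro s t hst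
    simp only [Function.comp_apply]
    rw [hsymm]
    exact hf.2 _ _ ((hg s t).1 hst)
  have hauto := hA _ hcond
  refine ⟨hf.1, fun u v => ?_⟩
  constructor
  · exact hf.2 u v
  · intro huv
    have := (hauto.2 (g.symm u) (g.symm v)).2 (by
      simp only [Function.comp_apply, Equiv.apply_symm_apply]
      rw [hsymm]; exact huv)
    rw [hsymm] at this
    exact this

theorem reversible_congr (g : A ≃ B) (hg : ∀ s t : A, s < t ↔ g s < g t) :
    Reversible A ↔ Reversible B := by
  constructor
  · exact reversible_of_equiv g hg
  · refine reversible_of_equiv g.symm (fun u v => ?_)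
    rw [hg]
    simp

end transfer

/-- The list model of the complete tree of height `m` over `L`. -/
def CT (m : ℕ) (L : Type u) : Type u := {l : List L // l.length < m}

instance CT.instPartialOrder {m : ℕ} {L : Type u} : PartialOrder (CT m L) where
  le x y := x.1 <+: y.1
  le_refl x := List.prefix_refl _
  le_trans x y z h1 h2 := List.IsPrefix.trans h1 h2
  le_antisymm x y h1 h2 := Subtype.ext (h1.eq_of_length (h1.length_le.antisymm h2.length_le))

lemma CT.le_def_s19 {m : ℕ} {L : Type u} {x y : CT m L} : x ≤ y ↔ x.1 <+: y.1 := ⟨fun h => h, fun h => h⟩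

lemma CT.lt_def {m : ℕ} {L : Type u} {x y : CT m L} :
    x < y ↔ x.1 <+: y.1 ∧ x.1.length < y.1.length := by
  rw [lt_iff_le_and_ne, CT.le_def_s19]
  constructor
  · rintro ⟨h1, h2⟩
    refine ⟨h1, lt_of_le_of_ne h1.length_le ?_⟩
    intro hlen
    exact h2 (Subtype.ext (h1.eq_of_length hlen))
  · rintro ⟨h1, h2⟩
    exact ⟨h1, fun he => absurd (congrArg (fun z => z.1.length) he) h2.ne⟩

section graphs
variable {L : Type u}

def toGraph (l : List L) : Set (Ordinal.{u} × L) :=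
  {q | ∃ j : ℕ, ∃ h : j < l.length, q = ((j : Ordinal.{u}), l[j])}

lemma mem_toGraph {l : List L} {γ : Ordinal.{u}} {x : L} :
    (γ, x) ∈ toGraph l ↔ ∃ j : ℕ, ∃ h : j < l.length, γ = (j : Ordinal.{u}) ∧ x = l[j] := by
  simp [toGraph, Prod.ext_iff]

lemma toGraph_spec {m : ℕ} (l : List L) (hl : l.length < m) :
    ∃ β < ((m : ℕ) : Ordinal.{u}),
      (∀ p ∈ toGraph l, p.1 < β) ∧ ∀ γ < β, ∃! x : L, (γ, x) ∈ toGraph l := by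
  refine ⟨(l.length : Ordinal.{u}), by exact_mod_cast hl, ?_, ?_⟩
  · rintro ⟨γ, x⟩ hp
    rw [mem_toGraph] at hp
    obtain ⟨j, hj, rfl, rfl⟩ := hp
    show (j : Ordinal.{u}) < (l.length : Ordinal.{u})
    exact_mod_cast hj
  · intro γ hγ
    obtain ⟨j, rfl⟩ := Ordinal.lt_omega0.1 (hγ.trans (Ordinal.nat_lt_omega0 _))
    have hj : j < l.length := by exact_mod_cast hγ
    refine ⟨l[j], mem_toGraph.2 ⟨j, hj, rfl, rfl⟩, ?_⟩
    intro x hx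
    rw [mem_toGraph] at hx
    obtain ⟨j', hj', hjj, rfl⟩ := hx
    have hj'j : j' = j := by exact_mod_cast hjj.symm
    subst hj'j
    rfl

lemma toGraph_subset_iff {l₁ l₂ : List L} : toGraph l₁ ⊆ toGraph l₂ ↔ l₁ <+: l₂ := by
  constructor
  · intro hsub
    have hlen : l₁.length ≤ l₂.length := by
      by_contra hcon
      push_neg at hcon
      have h2 : l₂.length < l₁.length := hcon
      have := hsub (mem_toGraph.2 ⟨l₂.length, h2, rfl, rfl⟩ :
        ((l₂.length : Ordinal.{u}), l₁[l₂.length]) ∈ toGraph l₁)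
      rw [mem_toGraph] at this
      obtain ⟨j, hj, hjj, -⟩ := this
      have : l₂.length = j := by exact_mod_cast hjj
      omega
    rw [List.prefix_iff_eq_take]
    apply List.ext_getElem
    · simp [hlen]
    · intro j h1 h2
      have hj1 : j < l₁.length := h1
      have hmem := hsub (mem_toGraph.2 ⟨j, hj1, rfl, rfl⟩ :
        ((j : Ordinal.{u}), l₁[j]) ∈ toGraph l₁)
      rw [mem_toGraph] at hmem
      obtain ⟨j', hj', hjj, hval⟩ := hmem
      have hjeq : j = j' := by exact_mod_cast hjj
      subst hjeq
      simp [hval]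
  · intro hpre
    rintro ⟨γ, x⟩ hp
    rw [mem_toGraph] at hp ⊢
    obtain ⟨j, hj, rfl, rfl⟩ := hp
    exact ⟨j, lt_of_lt_of_le hj hpre.length_le, rfl, hpre.getElem hj⟩

lemma toGraph_inj {l₁ l₂ : List L} (h : toGraph l₁ = toGraph l₂) : l₁ = l₂ := by
  have h1 := toGraph_subset_iff.1 h.le
  have h2 := toGraph_subset_iff.1 h.ge
  exact h1.eq_of_length (h1.length_le.antisymm h2.length_le)

end graphs

section equivCT
variable {L : Type u} {m : ℕ}

noncomputable def ctEquiv (m : ℕ) (L : Type u) :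
    CT m L ≃ CompleteTree ((m : ℕ) : Ordinal.{u}) L := by
  refine Equiv.ofBijective (fun x => ⟨toGraph x.1, toGraph_spec x.1 x.2⟩) ⟨?_, ?_⟩
  · intro x y hxy
    exact Subtype.ext (toGraph_inj (congrArg Subtype.val hxy))
  · rintro ⟨s, hs⟩
    obtain ⟨β, hβm, hdom, hfun⟩ := hs
    obtain ⟨b, rfl⟩ := Ordinal.lt_omega0.1 (hβm.trans (Ordinal.nat_lt_omega0 _))
    have hbm : b < m := by exact_mod_cast hβm
    set l : List L := List.ofFn (fun j : Fin b =>
      (hfun (j : ℕ) (by exact_mod_cast j.2)).exists.choose) with hl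
    have hlen : l.length = b := by simp [hl]
    refine ⟨⟨l, by omega⟩, ?_⟩
    apply Subtype.ext
    show toGraph l = s
    apply Set.eq_of_subset_of_subset
    · rintro ⟨γ, x⟩ hp
      rw [mem_toGraph] at hp
      obtain ⟨j, hj, rfl, rfl⟩ := hp
      have hjb : j < b := by omega
      have : l[j] = (hfun (j : ℕ) (by exact_mod_cast hjb)).exists.choose := by
        simp [hl]
      rw [this]
      exact (hfun (j : ℕ) (by exact_mod_cast hjb)).exists.choose_spec
    · rintro ⟨γ, x⟩ hp
      have hγ : γ < (b : Ordinal.{u}) := hdom _ hp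
      obtain ⟨j, rfl⟩ := Ordinal.lt_omega0.1 (hγ.trans (Ordinal.nat_lt_omega0 _))
      have hjb : j < b := by exact_mod_cast hγ
      rw [mem_toGraph]
      refine ⟨j, by omega, rfl, ?_⟩
      have h1 : l[j] = (hfun (j : ℕ) (by exact_mod_cast hjb)).exists.choose := by
        simp [hl]
      rw [h1]
      exact (hfun (j : ℕ) (by exact_mod_cast hjb)).unique hp
        (hfun (j : ℕ) (by exact_mod_cast hjb)).exists.choose_spec

lemma ctEquiv_le_iff {x y : CT m L} : x ≤ y ↔ ctEquiv m L x ≤ ctEquiv m L y := by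
  show x.1 <+: y.1 ↔ _
  rw [← toGraph_subset_iff]
  rfl

lemma ctEquiv_lt_iff {x y : CT m L} : x < y ↔ ctEquiv m L x < ctEquiv m L y := by
  rw [lt_iff_le_not_ge, lt_iff_le_not_ge, ← ctEquiv_le_iff, ← ctEquiv_le_iff]

end equivCT

section model
variable {L : Type u} {I : Type v}

abbrev MT (n : I → ℕ) (L : Type u) : Type (max u v) := Σ i : I, CT (n i) L

variable {n : I → ℕ}

lemma MT.ext {a b : MT n L} (h1 : a.1 = b.1) (h2 : a.2.1 = b.2.1) : a = b := by
  obtain ⟨i, x⟩ := a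
  obtain ⟨j, y⟩ := b
  cases h1
  exact congrArg _ (Subtype.ext h2)

lemma MT.le_iff {a b : MT n L} : a ≤ b ↔ a.1 = b.1 ∧ a.2.1 <+: b.2.1 := by
  obtain ⟨i, x⟩ := a
  obtain ⟨j, y⟩ := b
  constructor
  · intro h
    cases h
    exact ⟨rfl, by assumption⟩
  · rintro ⟨h1, h2⟩
    cases h1
    exact Sigma.LE.fiber _ _ _ h2

lemma MT.lt_iff {a b : MT n L} :
    a < b ↔ a.1 = b.1 ∧ a.2.1 <+: b.2.1 ∧ a.2.1.length < b.2.1.length := by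
  obtain ⟨i, x⟩ := a
  obtain ⟨j, y⟩ := b
  constructor
  · intro h
    cases h
    next h =>
      rw [CT.lt_def] at h
      exact ⟨rfl, h.1, h.2⟩
  · rintro ⟨h1, h2, h3⟩
    cases h1
    exact Sigma.LT.fiber _ _ _ (CT.lt_def.2 ⟨h2, h3⟩)

variable (hn : ∀ i : I, 0 < n i)

/-- The root of component `i`. -/
def rt (i : I) : MT n L := ⟨i, ⟨[], by simpa using hn i⟩⟩

variable (f : MT n L → MT n L)

/-- The component map induced by a condensation. -/
def Fc (i : I) : I := (f (rt hn i)).1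

/-- The level of the image of the root of component `i`. -/
def dlt (i : I) : ℕ := (f (rt hn i)).2.1.length

variable {f}

lemma chain_len (hf : IsCond f) :
    ∀ c : ℕ, ∀ s t : MT n L, s ≤ t → t.2.1.length - s.2.1.length = c →
      (f s).2.1.length + c ≤ (f t).2.1.length := by
  intro c
  induction c with
  | zero =>
    intro s t hst hc
    have h1 := MT.le_iff.1 hst
    have := h1.2.length_le
    have hst' : s = t := MT.ext h1.1 (h1.2.eq_of_length (by omega))
    subst hst'
    omega
  | succ c ih =>
    intro s t hst hc
    have h1 := MT.le_iff.1 hst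
    have hsl := h1.2.length_le
    have htpos : t.2.1.length - 1 < n t.1 := by
      have := t.2.2
      omega
    set t' : MT n L := ⟨t.1, ⟨t.2.1.take (t.2.1.length - 1), by
      simpa using htpos⟩⟩ with ht'
    have hlt' : t'.2.1.length = t.2.1.length - 1 := by
      show (t.2.1.take (t.2.1.length - 1)).length = _
      simp
    have h2 : s ≤ t' := by
      rw [MT.le_iff]
      refine ⟨h1.1, ?_⟩
      rw [List.prefix_take_iff]
      exact ⟨h1.2, by omega⟩
    have h3 : t' < t := by
      rw [MT.lt_iff]
      exact ⟨rfl, List.take_prefix _ _, by omega⟩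
    have h4 := hf.2 _ _ h3
    rw [MT.lt_iff] at h4
    have h5 := ih s t' h2 (by omega)
    omega

lemma f_len_ge (hf : IsCond f) (t : MT n L) :
    dlt hn f t.1 + t.2.1.length ≤ (f t).2.1.length := by
  have := chain_len hf t.2.1.length (rt hn t.1) t
    (MT.le_iff.2 ⟨rfl, List.nil_prefix⟩) (by simp [rt])
  simpa [dlt] using this

lemma f_fst (hf : IsCond f) (t : MT n L) : (f t).1 = Fc hn f t.1 := by
  by_cases h : t.2.1 = []
  · have : t = rt hn t.1 := MT.ext rfl (by simp [rt, h])
    rw [this]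
    rfl
  · have h1 : rt hn t.1 < t := by
      rw [MT.lt_iff]
      refine ⟨rfl, List.nil_prefix, ?_⟩
      simpa [rt] using List.length_pos_iff.2 h
    have h2 := hf.2 _ _ h1
    rw [MT.lt_iff] at h2
    exact h2.1.symm

lemma coheight [Infinite L] (hf : IsCond f) (t : MT n L) :
    (f t).2.1.length + (n t.1 - t.2.1.length) ≤ n (Fc hn f t.1) := by
  obtain ⟨x₀⟩ : Nonempty L := inferInstance
  have htl := t.2.2
  set u : MT n L := ⟨t.1, ⟨t.2.1 ++ List.replicate (n t.1 - 1 - t.2.1.length) x₀, by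
    simp
    omega⟩⟩ with hu
  have hul : u.2.1.length = n t.1 - 1 := by
    show (t.2.1 ++ List.replicate (n t.1 - 1 - t.2.1.length) x₀).length = _
    simp
    omega
  have h1 : t ≤ u := MT.le_iff.2 ⟨rfl, List.prefix_append _ _⟩
  have h2 := chain_len hf (u.2.1.length - t.2.1.length) t u h1 rfl
  have h3 : (f u).2.1.length < n ((f u).1) := (f u).2.2
  have h4 : n ((f u).1) = n (Fc hn f t.1) := congrArg n (f_fst hn hf u)
  omega

lemma n_F_ge [Infinite L] (hf : IsCond f) (i : I) :
    dlt hn f i + n i ≤ n (Fc hn f i) := by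
  have := coheight hn hf (rt hn i)
  simpa [rt, dlt] using this

lemma F_surj (hf : IsCond f) : Function.Surjective (Fc hn f) := by
  intro i'
  obtain ⟨x, hx⟩ := hf.1.2 (rt hn i')
  have hnil : x.2.1 = [] := by
    by_contra h
    have h1 : rt hn x.1 < x := by
      rw [MT.lt_iff]
      refine ⟨rfl, List.nil_prefix, ?_⟩
      simpa [rt] using List.length_pos_iff.2 h
    have h2 := hf.2 _ _ h1
    rw [hx, MT.lt_iff] at h2
    simp [rt] at h2
  refine ⟨x.1, ?_⟩
  have : x = rt hn x.1 := MT.ext rfl (by simp [rt, hnil])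
  show (f (rt hn x.1)).1 = i'
  rw [← this, hx]
  rfl

lemma auto_of_heights [Infinite L] (hf : IsCond f)
    (H : ∀ i, n (Fc hn f i) = n i ∧ dlt hn f i = 0) : IsAuto f := by
  have hlevel : ∀ t : MT n L, (f t).2.1.length = t.2.1.length := by
    intro t
    have h1 := f_len_ge hn hf t
    have h2 := coheight hn hf t
    have h3 := (H t.1).1
    have h4 := (H t.1).2
    have h5 := t.2.2
    omega
  refine ⟨hf.1, fun s t => ⟨hf.2 s t, ?_⟩⟩
  intro hlt
  rw [MT.lt_iff] at hlt
  obtain ⟨hc, hp, hl⟩ := hlt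
  have hls : s.2.1.length < t.2.1.length := by
    rw [hlevel s, hlevel t] at hl
    exact hl
  set s' : MT n L := ⟨t.1, ⟨t.2.1.take s.2.1.length, by
    have := t.2.2
    simp
    omega⟩⟩ with hs'
  have hs'len : s'.2.1.length = s.2.1.length := by
    show (t.2.1.take s.2.1.length).length = _
    simp
    omega
  have h1 : s' < t := by
    rw [MT.lt_iff]
    exact ⟨rfl, List.take_prefix _ _, by omega⟩
  have h2 := hf.2 _ _ h1
  rw [MT.lt_iff] at h2
  have heq : f s = f s' := by
    apply MT.ext (by rw [hc, h2.1])
    have e1 := List.prefix_iff_eq_take.1 hp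
    have e2 := List.prefix_iff_eq_take.1 h2.2.1
    rw [e1, e2, hlevel s, hlevel s', hs'len]
  have : s = s' := hf.1.1 heq
  rw [this]
  exact h1

end model

section model2
variable {L : Type u} {I : Type v} {n : I → ℕ} (hn : ∀ i : I, 0 < n i)
variable {f : MT n L → MT n L}
open Classical in
private noncomputable def _dummyDecEq : DecidableEq I := Classical.decEq I

lemma heights_of_finite_to_one [Infinite L] (hf : IsCond f)
    (hfin : ∀ k : ℕ, {i : I | n i = k}.Finite) :
    ∀ i, n (Fc hn f i) = n i ∧ dlt hn f i = 0 := by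
  have key : ∀ k : ℕ, Fc hn f '' {i | n i = k} = {i | n i = k} := by
    intro k
    induction k using Nat.strong_induction_on with
    | _ k ih =>
      have hsub : {i | n i = k} ⊆ Fc hn f '' {i | n i = k} := by
        intro i' hi'
        obtain ⟨j, hj⟩ := F_surj hn hf i'
        have hge := n_F_ge hn hf j
        rw [hj] at hge
        have hik : n i' = k := hi'
        have hnj : n j ≤ k := by omega
        rcases eq_or_lt_of_le hnj with heq | hlt
        · exact ⟨j, heq, hj⟩
        · exfalso
          have : Fc hn f j ∈ Fc hn f '' {i | n i = n j} := ⟨j, rfl, rfl⟩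
          rw [ih (n j) hlt] at this
          rw [hj] at this
          have : n i' = n j := this
          omega
      exact (Set.eq_of_subset_of_ncard_le hsub
        (Set.ncard_image_le (hfin k)) ((hfin k).image _)).symm
  intro i
  have h1 : Fc hn f i ∈ Fc hn f '' {j | n j = n i} := ⟨i, rfl, rfl⟩
  rw [key (n i)] at h1
  have h2 : n (Fc hn f i) = n i := h1
  have h3 := n_F_ge hn hf i
  have h4 := hn i
  exact ⟨h2, by omega⟩

lemma heights_of_bounded [Infinite L] (hf : IsCond f) (k : ℕ)
    (hE : {i : I | n i ≠ k}.Finite) (hlt : ∀ i, n i ≠ k → n i < k) :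
    ∀ i, n (Fc hn f i) = n i ∧ dlt hn f i = 0 := by
  have hle : ∀ i, n i ≤ k := by
    intro i
    by_cases h : n i = k
    · omega
    · exact (hlt i h).le
  set E : Set I := {i | n i ≠ k} with hEdef
  have hEsub : E ⊆ Fc hn f '' E := by
    intro i' hi'
    obtain ⟨j, hj⟩ := F_surj hn hf i'
    have hge := n_F_ge hn hf j
    rw [hj] at hge
    have h1 : n i' < k := hlt i' hi'
    refine ⟨j, ?_, hj⟩
    show n j ≠ k
    omega
  have himg : Fc hn f '' E = E :=
    (Set.eq_of_subset_of_ncard_le hEsub (Set.ncard_image_le hE) (hE.image _)).symm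
  have hmaps : Set.MapsTo (Fc hn f) E E := fun i hi => himg ▸ Set.mem_image_of_mem _ hi
  have hbij : Set.BijOn (Fc hn f) E E :=
    (hE.surjOn_iff_bijOn_of_mapsTo hmaps).1 hEsub
  have hinj : Set.InjOn (Fc hn f) E := hbij.2.1
  -- sums over the finite set E
  classical
  have himgF : hE.toFinset.image (Fc hn f) = hE.toFinset := by
    apply Finset.coe_injective
    simp only [Finset.coe_image, Set.Finite.coe_toFinset]
    exact himg
  have hsum : ∑ i ∈ hE.toFinset, n (Fc hn f i) = ∑ i ∈ hE.toFinset, n i := by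
    rw [← Finset.sum_image (f := n) (g := Fc hn f) ?hinj, himgF]
    case hinj =>
      intro a ha b hb hab
      exact hinj (by simpa using ha) (by simpa using hb) hab
  have hpt : ∀ i ∈ hE.toFinset, n i = n (Fc hn f i) := by
    have hmono : ∀ i ∈ hE.toFinset, n i ≤ n (Fc hn f i) := by
      intro i _
      have := n_F_ge hn hf i
      omega
    exact (Finset.sum_eq_sum_iff_of_le hmono).1 hsum.symm
  intro i
  have hni : n (Fc hn f i) = n i := by
    by_cases hi : i ∈ E
    · exact ((hpt i (hE.mem_toFinset.2 hi))).symm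
    · have h1 : n i = k := by simpa [hEdef] using hi
      have h2 := n_F_ge hn hf i
      have h3 := hle (Fc hn f i)
      omega
  have := n_F_ge hn hf i
  have := hn i
  exact ⟨hni, by omega⟩

end model2

section construction
variable {L : Type u} {I : Type v} {n : I → ℕ}

/-- The path to the `j`-th distinguished node at depth `dd`. -/
def xl (a : ℕ → L) (dd : ℕ) (j : ℕ) : List L := List.replicate (dd - 1) (a 0) ++ [a j]

lemma xl_length (a : ℕ → L) {dd : ℕ} (hdd : 0 < dd) (j : ℕ) : (xl a dd j).length = dd := by
  simp [xl]
  omega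

lemma xl_inj {a : ℕ → L} (ha : Function.Injective a) {dd j j' : ℕ}
    (h : xl a dd j = xl a dd j') : j = j' := by
  unfold xl at h
  have h2 := List.append_cancel_left h
  exact ha (by simpa using h2)

lemma xl_uniq {a : ℕ → L} (ha : Function.Injective a) {dd : ℕ} (hdd : 0 < dd) {j j' : ℕ}
    {l : List L} (h1 : xl a dd j <+: l) (h2 : xl a dd j' <+: l) : j = j' := by
  have h3 := List.prefix_of_prefix_length_le h1 h2
    (by rw [xl_length a hdd, xl_length a hdd])
  exact xl_inj ha (h3.eq_of_length (by rw [xl_length a hdd, xl_length a hdd]))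

lemma xl_prefix_append {a : ℕ → L} {dd : ℕ} (hd : 0 < dd) {j : ℕ} {l : List L}
    (hx : xl a dd j <+: l) : xl a dd j ++ l.drop dd = l := by
  obtain ⟨r, hr⟩ := hx
  rw [← hr, List.drop_left' (xl_length a hd j)]

variable (a : ℕ → L) (E : ℕ → I) (i₀ : I) (k₁ : ℕ)

open Classical in
/-- The condensation which is not an automorphism. -/
noncomputable def cf (hEk : ∀ j, n (E j) = k₁) (hm : k₁ < n i₀) :
    MT n L → MT n L := fun t =>
  if h0 : ∃ j, t.1 = E j then
    if h0.choose = 0 then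
      ⟨i₀, ⟨xl a (n i₀ - k₁) 0 ++ t.2.1, by
        have h1 := t.2.2
        have h2 : n t.1 = k₁ := by rw [h0.choose_spec]; exact hEk _
        simp [xl]
        omega⟩⟩
    else
      ⟨E (h0.choose - 1), ⟨t.2.1, by
        have h1 := t.2.2
        have h2 : n t.1 = k₁ := by rw [h0.choose_spec]; exact hEk _
        rw [hEk]
        omega⟩⟩
  else if hS : t.1 = i₀ ∧ ∃ j, xl a (n i₀ - k₁) j <+: t.2.1 then
    ⟨i₀, ⟨xl a (n i₀ - k₁) (hS.2.choose + 1) ++ t.2.1.drop (n i₀ - k₁), by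
      have h1 := t.2.2
      have h3 : n t.1 = n i₀ := by rw [hS.1]
      have h2 := hS.2.choose_spec.length_le
      rw [xl_length a (by omega)] at h2
      simp [xl]
      omega⟩⟩
  else t

open Classical in
/-- The inverse of `cf`. -/
noncomputable def cg (hEk : ∀ j, n (E j) = k₁) (hm : k₁ < n i₀) (hk : 0 < k₁) :
    MT n L → MT n L := fun t =>
  if h0 : ∃ j, t.1 = E j then
    ⟨E (h0.choose + 1), ⟨t.2.1, by
      have h1 := t.2.2
      have h2 : n t.1 = k₁ := by rw [h0.choose_spec]; exact hEk _
      rw [hEk]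
      omega⟩⟩
  else if hS : t.1 = i₀ ∧ ∃ j, xl a (n i₀ - k₁) j <+: t.2.1 then
    if hS.2.choose = 0 then
      ⟨E 0, ⟨t.2.1.drop (n i₀ - k₁), by
        have h1 := t.2.2
        have h3 : n t.1 = n i₀ := by rw [hS.1]
        rw [hEk]
        simp
        omega⟩⟩
    else
      ⟨i₀, ⟨xl a (n i₀ - k₁) (hS.2.choose - 1) ++ t.2.1.drop (n i₀ - k₁), by
        have h1 := t.2.2
        have h3 : n t.1 = n i₀ := by rw [hS.1]
        have h2 := hS.2.choose_spec.length_le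
        rw [xl_length a (by omega)] at h2
        simp [xl]
        omega⟩⟩
  else t

variable {a E i₀ k₁}
variable {hEk : ∀ j, n (E j) = k₁} {hm : k₁ < n i₀}
variable {hk : 0 < k₁}
variable (ha : Function.Injective a) (hEinj : Function.Injective E)
  (hEne : ∀ j, E j ≠ i₀)
include ha hEinj hEne
set_option linter.unusedSectionVars false

-- Evaluation lemmas for cf
lemma cf_eval_E0 {t : MT n L} (ht : t.1 = E 0) :
    (cf a E i₀ k₁ hEk hm t).1 = i₀ ∧
      (cf a E i₀ k₁ hEk hm t).2.1 = xl a (n i₀ - k₁) 0 ++ t.2.1 := by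
  have h0 : ∃ j, t.1 = E j := ⟨0, ht⟩
  have hc : h0.choose = 0 := hEinj (h0.choose_spec.symm.trans ht)
  unfold cf
  rw [dif_pos h0, if_pos hc]
  exact ⟨rfl, rfl⟩

lemma cf_eval_Esucc {t : MT n L} {j : ℕ} (ht : t.1 = E (j + 1)) :
    (cf a E i₀ k₁ hEk hm t).1 = E j ∧
      (cf a E i₀ k₁ hEk hm t).2.1 = t.2.1 := by
  have h0 : ∃ j', t.1 = E j' := ⟨j + 1, ht⟩
  have hc : h0.choose = j + 1 := hEinj (h0.choose_spec.symm.trans ht)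
  unfold cf
  rw [dif_pos h0, if_neg (by omega)]
  refine ⟨?_, rfl⟩
  show E (h0.choose - 1) = E j
  rw [hc]
  congr 1

lemma cf_eval_S {t : MT n L} {j : ℕ} (ht : t.1 = i₀)
    (hx : xl a (n i₀ - k₁) j <+: t.2.1) :
    (cf a E i₀ k₁ hEk hm t).1 = i₀ ∧
      (cf a E i₀ k₁ hEk hm t).2.1 =
        xl a (n i₀ - k₁) (j + 1) ++ t.2.1.drop (n i₀ - k₁) := by
  have h0 : ¬∃ j', t.1 = E j' := by
    rintro ⟨j', hj'⟩
    exact hEne j' (hj'.symm.trans ht).symm.symm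
  have hS : t.1 = i₀ ∧ ∃ j', xl a (n i₀ - k₁) j' <+: t.2.1 := ⟨ht, j, hx⟩
  have hc : hS.2.choose = j := xl_uniq ha (by omega) hS.2.choose_spec hx
  unfold cf
  rw [dif_neg h0, dif_pos hS]
  refine ⟨rfl, ?_⟩
  show xl a (n i₀ - k₁) (hS.2.choose + 1) ++ t.2.1.drop (n i₀ - k₁) = _
  rw [hc]

lemma cf_eval_fix {t : MT n L} (h1 : ∀ j, t.1 ≠ E j)
    (h2 : ¬(t.1 = i₀ ∧ ∃ j, xl a (n i₀ - k₁) j <+: t.2.1)) :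
    cf a E i₀ k₁ hEk hm t = t := by
  unfold cf
  rw [dif_neg (by rintro ⟨j, hj⟩; exact h1 j hj), dif_neg h2]

-- Evaluation lemmas for cg
lemma cg_eval_E {t : MT n L} {j : ℕ} (ht : t.1 = E j) :
    (cg a E i₀ k₁ hEk hm hk t).1 = E (j + 1) ∧
      (cg a E i₀ k₁ hEk hm hk t).2.1 = t.2.1 := by
  have h0 : ∃ j', t.1 = E j' := ⟨j, ht⟩
  have hc : h0.choose = j := hEinj (h0.choose_spec.symm.trans ht)
  unfold cg
  rw [dif_pos h0]
  refine ⟨?_, rfl⟩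
  show E (h0.choose + 1) = E (j + 1)
  rw [hc]

lemma cg_eval_S0 {t : MT n L} (ht : t.1 = i₀)
    (hx : xl a (n i₀ - k₁) 0 <+: t.2.1) :
    (cg a E i₀ k₁ hEk hm hk t).1 = E 0 ∧
      (cg a E i₀ k₁ hEk hm hk t).2.1 = t.2.1.drop (n i₀ - k₁) := by
  have h0 : ¬∃ j', t.1 = E j' := by
    rintro ⟨j', hj'⟩
    exact hEne j' (hj'.symm.trans ht).symm.symm
  have hS : t.1 = i₀ ∧ ∃ j', xl a (n i₀ - k₁) j' <+: t.2.1 := ⟨ht, 0, hx⟩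
  have hc : hS.2.choose = 0 := xl_uniq ha (by omega) hS.2.choose_spec hx
  unfold cg
  rw [dif_neg h0, dif_pos hS, if_pos hc]
  exact ⟨rfl, rfl⟩

lemma cg_eval_Ssucc {t : MT n L} {j : ℕ} (ht : t.1 = i₀)
    (hx : xl a (n i₀ - k₁) (j + 1) <+: t.2.1) :
    (cg a E i₀ k₁ hEk hm hk t).1 = i₀ ∧
      (cg a E i₀ k₁ hEk hm hk t).2.1 =
        xl a (n i₀ - k₁) j ++ t.2.1.drop (n i₀ - k₁) := by
  have h0 : ¬∃ j', t.1 = E j' := by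
    rintro ⟨j', hj'⟩
    exact hEne j' (hj'.symm.trans ht).symm.symm
  have hS : t.1 = i₀ ∧ ∃ j', xl a (n i₀ - k₁) j' <+: t.2.1 := ⟨ht, j + 1, hx⟩
  have hc : hS.2.choose = j + 1 := xl_uniq ha (by omega) hS.2.choose_spec hx
  unfold cg
  rw [dif_neg h0, dif_pos hS, if_neg (by omega)]
  refine ⟨rfl, ?_⟩
  show xl a (n i₀ - k₁) (hS.2.choose - 1) ++ t.2.1.drop (n i₀ - k₁) = _
  rw [hc]
  congr 2

lemma cg_eval_fix {t : MT n L} (h1 : ∀ j, t.1 ≠ E j)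
    (h2 : ¬(t.1 = i₀ ∧ ∃ j, xl a (n i₀ - k₁) j <+: t.2.1)) :
    cg a E i₀ k₁ hEk hm hk t = t := by
  unfold cg
  rw [dif_neg (by rintro ⟨j, hj⟩; exact h1 j hj), dif_neg h2]


lemma cg_cf (t : MT n L) :
    cg a E i₀ k₁ hEk hm hk (cf a E i₀ k₁ hEk hm t) = t := by
  have hd : 0 < n i₀ - k₁ := by omega
  by_cases h0 : ∃ j, t.1 = E j
  · obtain ⟨j, hj⟩ := h0
    cases j with
    | zero =>
      have e := cf_eval_E0 (hEk := hEk) (hm := hm) ha hEinj hEne hj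
      have hx : xl a (n i₀ - k₁) 0 <+: (cf a E i₀ k₁ hEk hm t).2.1 := by
        rw [e.2]; exact List.prefix_append _ _
      have e2 := cg_eval_S0 (hEk := hEk) (hm := hm) (hk := hk) ha hEinj hEne e.1 hx
      refine MT.ext (e2.1.trans hj.symm) ?_
      rw [e2.2, e.2, List.drop_left' (xl_length a hd 0)]
    | succ j =>
      have e := cf_eval_Esucc (hEk := hEk) (hm := hm) ha hEinj hEne hj
      have e2 := cg_eval_E (hEk := hEk) (hm := hm) (hk := hk) ha hEinj hEne e.1
      exact MT.ext (e2.1.trans hj.symm) (e2.2.trans e.2)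
  · by_cases hS : t.1 = i₀ ∧ ∃ j, xl a (n i₀ - k₁) j <+: t.2.1
    · obtain ⟨ht, j, hx⟩ := hS
      have e := cf_eval_S (hEk := hEk) (hm := hm) ha hEinj hEne ht hx
      have hx2 : xl a (n i₀ - k₁) (j + 1) <+: (cf a E i₀ k₁ hEk hm t).2.1 := by
        rw [e.2]; exact List.prefix_append _ _
      have e2 := cg_eval_Ssucc (hEk := hEk) (hm := hm) (hk := hk) ha hEinj hEne e.1 hx2
      refine MT.ext (e2.1.trans ht.symm) ?_
      rw [e2.2, e.2, List.drop_left' (xl_length a hd _)]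
      exact xl_prefix_append hd hx
    · rw [cf_eval_fix (hEk := hEk) (hm := hm) ha hEinj hEne (fun j hj => h0 ⟨j, hj⟩) hS]
      exact cg_eval_fix (hEk := hEk) (hm := hm) (hk := hk) ha hEinj hEne (fun j hj => h0 ⟨j, hj⟩) hS

lemma cf_cg (t : MT n L) :
    cf a E i₀ k₁ hEk hm (cg a E i₀ k₁ hEk hm hk t) = t := by
  have hd : 0 < n i₀ - k₁ := by omega
  by_cases h0 : ∃ j, t.1 = E j
  · obtain ⟨j, hj⟩ := h0
    have e := cg_eval_E (hEk := hEk) (hm := hm) (hk := hk) ha hEinj hEne hj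
    have e2 := cf_eval_Esucc (hEk := hEk) (hm := hm) ha hEinj hEne e.1
    exact MT.ext (e2.1.trans hj.symm) (e2.2.trans e.2)
  · by_cases hS : t.1 = i₀ ∧ ∃ j, xl a (n i₀ - k₁) j <+: t.2.1
    · obtain ⟨ht, j, hx⟩ := hS
      cases j with
      | zero =>
        have e := cg_eval_S0 (hEk := hEk) (hm := hm) (hk := hk) ha hEinj hEne ht hx
        have e2 := cf_eval_E0 (hEk := hEk) (hm := hm) ha hEinj hEne e.1
        refine MT.ext (e2.1.trans ht.symm) ?_
        rw [e2.2, e.2]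
        exact xl_prefix_append hd hx
      | succ j =>
        have e := cg_eval_Ssucc (hEk := hEk) (hm := hm) (hk := hk) ha hEinj hEne ht hx
        have hx2 : xl a (n i₀ - k₁) j <+: (cg a E i₀ k₁ hEk hm hk t).2.1 := by
          rw [e.2]; exact List.prefix_append _ _
        have e2 := cf_eval_S (hEk := hEk) (hm := hm) ha hEinj hEne e.1 hx2
        refine MT.ext (e2.1.trans ht.symm) ?_
        rw [e2.2, e.2, List.drop_left' (xl_length a hd _)]
        exact xl_prefix_append hd hx
    · rw [cg_eval_fix (hEk := hEk) (hm := hm) (hk := hk) ha hEinj hEne (fun j hj => h0 ⟨j, hj⟩) hS]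
      exact cf_eval_fix (hEk := hEk) (hm := hm) ha hEinj hEne (fun j hj => h0 ⟨j, hj⟩) hS

lemma cf_mono {s t : MT n L} (hst : s < t) :
    cf a E i₀ k₁ hEk hm s < cf a E i₀ k₁ hEk hm t := by
  have hd : 0 < n i₀ - k₁ := by omega
  obtain ⟨hc, hp, hl⟩ := MT.lt_iff.1 hst
  by_cases h0 : ∃ j, t.1 = E j
  · obtain ⟨j, hj⟩ := h0
    cases j with
    | zero =>
      have et := cf_eval_E0 (hEk := hEk) (hm := hm) ha hEinj hEne hj
      have es := cf_eval_E0 (hEk := hEk) (hm := hm) ha hEinj hEne (hc.trans hj)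
      rw [MT.lt_iff]
      refine ⟨es.1.trans et.1.symm, ?_, ?_⟩
      · rw [es.2, et.2]; exact (List.prefix_append_right_inj _).2 hp
      · rw [es.2, et.2]; simp; omega
    | succ j =>
      have et := cf_eval_Esucc (hEk := hEk) (hm := hm) ha hEinj hEne hj
      have es := cf_eval_Esucc (hEk := hEk) (hm := hm) ha hEinj hEne (hc.trans hj)
      rw [MT.lt_iff]
      refine ⟨es.1.trans et.1.symm, ?_, ?_⟩
      · rw [es.2, et.2]; exact hp
      · rw [es.2, et.2]; exact hl
  · by_cases hS : t.1 = i₀ ∧ ∃ j, xl a (n i₀ - k₁) j <+: t.2.1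
    · obtain ⟨ht, j, hx⟩ := hS
      have et := cf_eval_S (hEk := hEk) (hm := hm) ha hEinj hEne ht hx
      by_cases hxs : ∃ j', xl a (n i₀ - k₁) j' <+: s.2.1
      · obtain ⟨j', hx'⟩ := hxs
        have hjj : j' = j := xl_uniq ha hd (hx'.trans hp) hx
        subst hjj
        have es := cf_eval_S (hEk := hEk) (hm := hm) ha hEinj hEne (hc.trans ht) hx'
        have hds := hx'.length_le
        rw [xl_length a hd] at hds
        rw [MT.lt_iff]
        refine ⟨es.1.trans et.1.symm, ?_, ?_⟩
        · rw [es.2, et.2]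
          exact (List.prefix_append_right_inj _).2 (hp.drop _)
        · rw [es.2, et.2]
          simp [xl]
          omega
      · have es := cf_eval_fix (hEk := hEk) (hm := hm) ha hEinj hEne
          (fun j' hj' => h0 ⟨j', hc.symm.trans hj'⟩) (fun hcon => hxs hcon.2)
        have hls : s.2.1.length < n i₀ - k₁ := by
          by_contra hcon
          push_neg at hcon
          exact hxs ⟨j, List.prefix_of_prefix_length_le hx hp
            (by rw [xl_length a hd]; omega)⟩
        have h1 : s.2.1 <+: xl a (n i₀ - k₁) j :=
          List.prefix_of_prefix_length_le hp hx (by rw [xl_length a hd]; omega)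
        have h2 : s.2.1 <+: List.replicate (n i₀ - k₁ - 1) (a 0) := by
          have h3 : s.2.1 <+: (xl a (n i₀ - k₁) j).take (n i₀ - k₁ - 1) :=
            List.prefix_take_iff.2 ⟨h1, by omega⟩
          rwa [xl, List.take_left' (by simp)] at h3
        rw [MT.lt_iff, es]
        refine ⟨hc.trans (ht.trans et.1.symm), ?_, ?_⟩
        · rw [et.2]
          refine h2.trans ?_
          exact ⟨[a (j + 1)] ++ t.2.1.drop (n i₀ - k₁), by simp [xl]⟩
        · rw [et.2]
          simp [xl]
          omega
    · have es := cf_eval_fix (hEk := hEk) (hm := hm) ha hEinj hEne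
        (fun j hj => h0 ⟨j, hc.symm.trans hj⟩)
        (fun hcon => hS ⟨hc.symm.trans hcon.1, hcon.2.choose,
          hcon.2.choose_spec.trans hp⟩)
      have et := cf_eval_fix (hEk := hEk) (hm := hm) ha hEinj hEne (fun j hj => h0 ⟨j, hj⟩) hS
      rw [es, et]
      exact hst

end construction

theorem not_reversible_model {L : Type u} {I : Type v} {n : I → ℕ} [Infinite L]
    (hn : ∀ i : I, 0 < n i) (k₁ : ℕ) (i₀ : I)
    (hJ : {i : I | n i = k₁}.Infinite) (hmm : k₁ < n i₀) :
    ¬ Reversible (MT n L) := by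
  classical
  set a : ℕ → L := fun j => Infinite.natEmbedding L j with ha_def
  have ha : Function.Injective a := (Infinite.natEmbedding L).injective
  set eI := hJ.natEmbedding with heI
  set E : ℕ → I := fun j => (eI j : I) with hE_def
  have hEk : ∀ j, n (E j) = k₁ := fun j => (eI j).2
  have hEinj : Function.Injective E := fun j j' h => eI.injective (Subtype.ext h)
  have hEne : ∀ j, E j ≠ i₀ := fun j h => by
    have h2 := hEk j
    rw [h] at h2
    omega
  have hk : 0 < k₁ := by
    have h2 := hn (E 0)
    have h3 := hEk 0
    omega
  intro hrev
  have hbij : Function.Bijective (cf a E i₀ k₁ hEk hmm) :=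
    Function.bijective_iff_has_inverse.2 ⟨cg a E i₀ k₁ hEk hmm hk,
      fun t => cg_cf ha hEinj hEne t, fun t => cf_cg ha hEinj hEne t⟩
  have hauto := hrev _ ⟨hbij, fun s t hst => cf_mono ha hEinj hEne hst⟩
  have h0s : (0 : ℕ) < n i₀ := by omega
  set s0 : MT n L := ⟨i₀, ⟨[], by simpa using h0s⟩⟩ with hs0
  set t0 : MT n L := ⟨E 0, ⟨[], by simpa using hn (E 0)⟩⟩ with ht0
  have hfs : cf a E i₀ k₁ hEk hmm s0 = s0 := by
    refine cf_eval_fix (hEk := hEk) (hm := hmm) ha hEinj hEne (fun j hj => hEne j hj.symm) ?_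
    rintro ⟨-, j, hx⟩
    have h4 := hx.length_le
    rw [xl_length a (by omega)] at h4
    simp [hs0] at h4
    have h5 : s0.2.1.length = 0 := rfl
    omega
  have hft := cf_eval_E0 (hEk := hEk) (hm := hmm) ha hEinj hEne (rfl : t0.1 = E 0)
  have hlt : cf a E i₀ k₁ hEk hmm s0 < cf a E i₀ k₁ hEk hmm t0 := by
    rw [MT.lt_iff, hfs]
    refine ⟨hft.1.symm, ?_, ?_⟩
    · exact List.nil_prefix
    · rw [hft.2]
      show ([] : List L).length < _
      simp [xl]
  have hcontra := (hauto.2 s0 t0).2 hlt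
  have h1 := (MT.lt_iff.1 hcontra).1
  exact hEne 0 h1.symm


section bigequiv
variable {L : Type u} {I : Type v} {n : I → ℕ}

noncomputable def bigEquiv (n : I → ℕ) (L : Type u) :
    MT n L ≃ (Σ i : I, CompleteTree ((n i : ℕ) : Ordinal.{u}) L) :=
  Equiv.sigmaCongrRight (fun i => ctEquiv (n i) L)

lemma bigEquiv_apply (i : I) (x : CT (n i) L) :
    bigEquiv n L ⟨i, x⟩ = ⟨i, ctEquiv (n i) L x⟩ := rfl

lemma bigEquiv_lt_iff {s t : MT n L} : s < t ↔ bigEquiv n L s < bigEquiv n L t := by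
  obtain ⟨i, x⟩ := s
  obtain ⟨j, y⟩ := t
  rw [bigEquiv_apply, bigEquiv_apply]
  constructor
  · intro h
    cases h
    exact Sigma.LT.fiber _ _ _ (ctEquiv_lt_iff.1 (by assumption))
  · intro h
    cases h
    exact Sigma.LT.fiber _ _ _ (ctEquiv_lt_iff.2 (by assumption))

end bigequiv

/-- Let `λ` be an infinite cardinal (realized as an infinite type
`L`), `I` a set, `⟨n_i : i ∈ I⟩` a family of positive integers and
`T := ⋃·_{i∈I} ^{<n_i}λ`. Then `T` is reversible iff either (i) the family
`⟨n_i : i ∈ I⟩` is finite-to-one, or (ii) there is `k ∈ ℕ` such that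
`{i ∈ I : n_i ≠ k}` is finite and `n_i < k` for every `i` with `n_i ≠ k`. -/
theorem stmt19 {L : Type u} [Infinite L] {I : Type v} (n : I → ℕ)
    (hn : ∀ i : I, 0 < n i) :
    Reversible (Σ i : I, CompleteTree ((n i : ℕ) : Ordinal.{u}) L) ↔
      (∀ k : ℕ, {i : I | n i = k}.Finite) ∨
      (∃ k : ℕ, {i : I | n i ≠ k}.Finite ∧ ∀ i : I, n i ≠ k → n i < k) := by
  have htrans := reversible_congr (bigEquiv n L)
    (fun s t => bigEquiv_lt_iff (n := n) (L := L) (s := s) (t := t))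
  rw [← htrans]
  constructor
  · intro hrev
    by_contra hcon
    push_neg at hcon
    obtain ⟨hni, hnii⟩ := hcon
    obtain ⟨k₀, hk₀⟩ := hni
    have hk₀' : {i : I | n i = k₀}.Infinite := hk₀
    by_cases hex : ∃ i, k₀ < n i
    · obtain ⟨i₀, hi₀⟩ := hex
      exact not_reversible_model hn k₀ i₀ hk₀' hi₀ hrev
    · push_neg at hex
      have h2 := hnii k₀
      have hinf : {i : I | n i ≠ k₀}.Infinite := by
        by_contra hfin
        rw [Set.not_infinite] at hfin
        obtain ⟨i, hi1, hi2⟩ := h2 hfin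
        have := hex i
        omega
      by_cases hall : ∀ m, m < k₀ → {i : I | n i = m}.Finite
      · have hfinU : (⋃ m ∈ Finset.range k₀, {i : I | n i = m}).Finite :=
          Set.Finite.biUnion (Finset.range k₀).finite_toSet
            (fun m hm => hall m (by simpa using hm))
        have hU : {i : I | n i ≠ k₀} ⊆ ⋃ m ∈ Finset.range k₀, {i : I | n i = m} := by
          intro i hi
          have h3 := hex i
          simp only [Set.mem_iUnion, Finset.mem_range, Set.mem_setOf_eq]
          exact ⟨n i, by
            have h4 : n i ≠ k₀ := hi
            omega, rfl⟩
        exact absurd (hfinU.subset hU) hinf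
      · push_neg at hall
        obtain ⟨m, hm1, hm2⟩ := hall
        obtain ⟨i₀, hi₀⟩ := hk₀'.nonempty
        have hni₀ : n i₀ = k₀ := hi₀
        exact not_reversible_model hn m i₀ hm2 (by omega) hrev
  · intro hcase f hf
    rcases hcase with h | ⟨k, h1, h2⟩
    · exact auto_of_heights hn hf (heights_of_finite_to_one hn hf h)
    · exact auto_of_heights hn hf (heights_of_bounded hn hf k h1 h2)
end
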